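/- arXiv:1407.3460 — 11 statements merged into one kernel-verified Lean document; each statement's English description precedes it below -/
import Mathlib

section
/- Let G be a finite simple graph that is triangle-free, has exactly 22 edges, and in which every vertex has degree at least 3. Then every vertex of G has degree at most 7. -/
/-! In a triangle-free graph the neighbours of a vertex `v` form an independent set, so the edges
at different neighbours are distinct: `∑_{u ∈ N(v)} deg u ≤ |E|`. With minimum degree `3` this
gives `3 · deg v ≤ 22`, i.e. `deg v ≤ 7`. -/

open Finset

namespace SimpleGraph

variable {V : Type*} {G : SimpleGraph V}

theorem CliqueFree.not_adj_of_adj_of_adj (h : G.CliqueFree 3) {v u w : V}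
    (hu : G.Adj v u) (hw : G.Adj v w) : ¬G.Adj u w := by
  classical
  exact fun huw => h {v, u, w} (is3Clique_triple_iff.mpr ⟨hu, hw, huw⟩)

variable [Fintype V] [DecidableRel G.Adj]

theorem CliqueFree.pairwiseDisjoint_incidenceFinset_neighborFinset [DecidableEq V]
    (h : G.CliqueFree 3) (v : V) :
    (G.neighborFinset v : Set V).PairwiseDisjoint fun u => G.incidenceFinset u := by
  intro u hu w hw hne
  rw [mem_coe, mem_neighborFinset] at hu hw
  simpa only [incidenceFinset, Set.disjoint_toFinset, Set.disjoint_iff_inter_eq_empty] using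
    G.incidenceSet_inter_incidenceSet_of_not_adj (h.not_adj_of_adj_of_adj hu hw) hne

theorem CliqueFree.sum_degree_neighborFinset_le_card_edgeFinset (h : G.CliqueFree 3) (v : V) :
    ∑ u ∈ G.neighborFinset v, G.degree u ≤ #G.edgeFinset := by
  classical
  calc ∑ u ∈ G.neighborFinset v, G.degree u
      = ∑ u ∈ G.neighborFinset v, #(G.incidenceFinset u) := by
        simp only [card_incidenceFinset_eq_degree]
    _ = #((G.neighborFinset v).biUnion fun u => G.incidenceFinset u) :=
        (card_biUnion (h.pairwiseDisjoint_incidenceFinset_neighborFinset v)).symm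
    _ ≤ #G.edgeFinset :=
        card_le_card (biUnion_subset.mpr fun u _ => G.incidenceFinset_subset u)

theorem CliqueFree.mul_degree_le_card_edgeFinset (h : G.CliqueFree 3) {δ : ℕ}
    (hδ : ∀ u, δ ≤ G.degree u) (v : V) : δ * G.degree v ≤ #G.edgeFinset :=
  calc δ * G.degree v = ∑ _u ∈ G.neighborFinset v, δ := by
        rw [sum_const, card_neighborFinset_eq_degree, smul_eq_mul, mul_comm]
    _ ≤ ∑ u ∈ G.neighborFinset v, G.degree u := sum_le_sum fun u _ => hδ u
    _ ≤ #G.edgeFinset := h.sum_degree_neighborFinset_le_card_edgeFinset v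

end SimpleGraph

theorem stmt_2_general {V : Type*} [Fintype V] (G : SimpleGraph V)
    [DecidableRel G.Adj]
    (htf : G.CliqueFree 3)
    (hcard : G.edgeFinset.card = 22)
    (hmin : ∀ v : V, 3 ≤ G.degree v) :
    ∀ v : V, G.degree v ≤ 7 := by
  intro v
  have := htf.mul_degree_le_card_edgeFinset hmin v
  omega

theorem stmt_2 {V : Type*} [Fintype V] [DecidableEq V] (G : SimpleGraph V)
    [DecidableRel G.Adj]
    (htf : G.CliqueFree 3)
    (hcard : G.edgeFinset.card = 22)
    (hmin : ∀ v : V, 3 ≤ G.degree v) :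
    ∀ v : V, G.degree v ≤ 7 :=
  stmt_2_general G htf hcard hmin
end

section
/- Let G be a finite simple graph that is triangle-free, has exactly 22 edges, and in which every vertex has degree at least 3. If a is a vertex of G with deg(a) = 7, then at least 6 of the 7 neighbors of a have degree exactly 3. -/
open Finset

theorem stmt_3 {V : Type*} [Fintype V] [DecidableEq V] (G : SimpleGraph V)
    [DecidableRel G.Adj]
    (htf : G.CliqueFree 3)
    (hcard : G.edgeFinset.card = 22)
    (hmin : ∀ v : V, 3 ≤ G.degree v)
    (a : V) (ha : G.degree a = 7) :
    6 ≤ ((G.neighborFinset a).filter (fun v => G.degree v = 3)).card := by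
  -- N(a) is independent
  have hindep : ∀ v ∈ G.neighborFinset a, ∀ w ∈ G.neighborFinset a, v ≠ w → ¬ G.Adj v w := by
    intro v hv w hw hne hadj
    rw [SimpleGraph.mem_neighborFinset] at hv hw
    exact htf {a, v, w} (by
      refine SimpleGraph.is3Clique_triple_iff.2 ⟨hv, hw, hadj⟩)
  -- sum of degrees over N(a) ≤ 22
  have hdisj : (G.neighborFinset a : Set V).PairwiseDisjoint (fun v => G.incidenceFinset v) := by
    intro v hv w hw hne
    simp only [Finset.mem_coe] at hv hw
    have := G.incidenceSet_inter_incidenceSet_of_not_adj (hindep v hv w hw hne) hne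
    refine Finset.disjoint_left.2 (fun e he1 he2 => ?_)
    rw [SimpleGraph.mem_incidenceFinset] at he1 he2
    have : e ∈ G.incidenceSet v ∩ G.incidenceSet w := ⟨he1, he2⟩
    rw [G.incidenceSet_inter_incidenceSet_of_not_adj (hindep v hv w hw hne) hne] at this
    exact this
  have hsum : ∑ v ∈ G.neighborFinset a, G.degree v ≤ 22 := by
    calc ∑ v ∈ G.neighborFinset a, G.degree v
        = ∑ v ∈ G.neighborFinset a, (G.incidenceFinset v).card := by
          simp [SimpleGraph.card_incidenceFinset_eq_degree]
      _ = ((G.neighborFinset a).biUnion (fun v => G.incidenceFinset v)).card :=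
          (Finset.card_biUnion hdisj).symm
      _ ≤ G.edgeFinset.card := by
          apply Finset.card_le_card
          intro e he
          simp only [Finset.mem_biUnion] at he
          obtain ⟨v, _, hv⟩ := he
          rw [SimpleGraph.mem_incidenceFinset] at hv
          exact SimpleGraph.mem_edgeFinset.2 hv.1
      _ = 22 := hcard
  -- counting
  set N := G.neighborFinset a
  set S := N.filter (fun v => G.degree v = 3) with hS
  set T := N.filter (fun v => ¬ G.degree v = 3) with hT
  have hNcard : N.card = 7 := by rw [← ha]; exact G.card_neighborFinset_eq_degree a
  have hST : S.card + T.card = 7 := by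
    rw [hS, hT, Finset.card_filter_add_card_filter_not]; exact hNcard
  have hsplit : ∑ v ∈ S, G.degree v + ∑ v ∈ T, G.degree v = ∑ v ∈ N, G.degree v := by
    rw [hS, hT, Finset.sum_filter_add_sum_filter_not]
  have hSsum : ∑ v ∈ S, G.degree v = 3 * S.card := by
    rw [Finset.sum_congr rfl (fun v hv => (Finset.mem_filter.1 hv).2), Finset.sum_const,
      smul_eq_mul, mul_comm]
  have hTsum : 4 * T.card ≤ ∑ v ∈ T, G.degree v := by
    rw [mul_comm, ← smul_eq_mul, ← Finset.sum_const]
    apply Finset.sum_le_sum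
    intro v hv
    have h3 := hmin v
    have hne := (Finset.mem_filter.1 hv).2
    omega
  omega
end

section
/- Let G be a finite simple graph that is triangle-free, has exactly 22 edges, and in which every vertex has degree at least 3. If a is a vertex of G with deg(a) = 6, then at least 2 neighbors of a have degree exactly 3. -/
theorem stmt_4 {V : Type*} [Fintype V] [DecidableEq V] (G : SimpleGraph V)
    [DecidableRel G.Adj]
    (htf : G.CliqueFree 3)
    (hcard : G.edgeFinset.card = 22)
    (hmin : ∀ v : V, 3 ≤ G.degree v)
    (a : V) (ha : G.degree a = 6) :
    2 ≤ ((G.neighborFinset a).filter (fun v => G.degree v = 3)).card := by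
  by_contra hlt
  push_neg at hlt
  -- neighbors are pairwise non-adjacent
  have hnadj : ∀ v ∈ G.neighborFinset a, ∀ w ∈ G.neighborFinset a, v ≠ w → ¬ G.Adj v w := by
    intro v hv w hw hvw hadj
    rw [SimpleGraph.mem_neighborFinset] at hv hw
    exact htf {a, v, w} (by
      rw [SimpleGraph.is3Clique_triple_iff]
      exact ⟨hv, hw, hadj⟩)
  -- incidence finsets of neighbors are pairwise disjoint
  have hdisj : ∀ v ∈ G.neighborFinset a, ∀ w ∈ G.neighborFinset a, v ≠ w →
      Disjoint (G.incidenceFinset v) (G.incidenceFinset w) := by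
    intro v hv w hw hvw
    simp only [Finset.disjoint_left]
    intro e he he'
    rw [SimpleGraph.mem_incidenceFinset] at he he'
    exact hnadj v hv w hw hvw (G.adj_of_mem_incidenceSet hvw he he')
  -- sum of degrees over neighbors ≤ 22
  have hsum_le : ∑ v ∈ G.neighborFinset a, G.degree v ≤ 22 := by
    calc ∑ v ∈ G.neighborFinset a, G.degree v
        = ∑ v ∈ G.neighborFinset a, (G.incidenceFinset v).card := by
          simp [SimpleGraph.card_incidenceFinset_eq_degree]
      _ = ((G.neighborFinset a).biUnion (fun v => G.incidenceFinset v)).card :=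
          (Finset.card_biUnion hdisj).symm
      _ ≤ G.edgeFinset.card := by
          apply Finset.card_le_card
          intro e he
          rw [Finset.mem_biUnion] at he
          obtain ⟨v, _, hev⟩ := he
          rw [SimpleGraph.mem_incidenceFinset] at hev
          exact SimpleGraph.mem_edgeFinset.2 hev.1
      _ = 22 := hcard
  -- lower bound on the sum
  have hsum_ge : 23 ≤ ∑ v ∈ G.neighborFinset a, G.degree v := by
    have hle1 : ((G.neighborFinset a).filter (fun v => G.degree v = 3)).card ≤ 1 := by omega
    have hsplit := Finset.card_filter_add_card_filter_not
      (s := G.neighborFinset a) (p := fun v => G.degree v = 3)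
    rw [G.card_neighborFinset_eq_degree, ha] at hsplit
    have h4 : ∀ v ∈ (G.neighborFinset a).filter (fun v => ¬ G.degree v = 3), 4 ≤ G.degree v := by
      intro v hv
      rw [Finset.mem_filter] at hv
      have := hmin v
      omega
    have h3 : ∀ v ∈ (G.neighborFinset a).filter (fun v => G.degree v = 3), 3 ≤ G.degree v :=
      fun v _ => hmin v
    have := Finset.sum_le_sum h4
    have := Finset.sum_le_sum h3
    have hsum_split : ∑ v ∈ G.neighborFinset a, G.degree v =
        (∑ v ∈ (G.neighborFinset a).filter (fun v => G.degree v = 3), G.degree v) +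
        (∑ v ∈ (G.neighborFinset a).filter (fun v => ¬ G.degree v = 3), G.degree v) :=
      (Finset.sum_filter_add_sum_filter_not _ _ _).symm
    simp only [Finset.sum_const, smul_eq_mul] at *
    omega
  omega
end

section
/- Let G be a finite simple graph that is triangle-free, has exactly 22 edges, and in which every vertex has degree at least 3. Suppose a is a vertex with deg(a) = 6 such that exactly 2 neighbors of a have degree 3. Then every other neighbor of a has degree exactly 4, and every edge of G has at least one endpoint in the set {a} ∪ N(a). -/
theorem stmt_6 {V : Type*} [Fintype V] [DecidableEq V] (G : SimpleGraph V)
    [DecidableRel G.Adj]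
    (htf : G.CliqueFree 3)
    (hcard : G.edgeFinset.card = 22)
    (hmin : ∀ v : V, 3 ≤ G.degree v)
    (a : V) (ha : G.degree a = 6)
    (h3 : ((G.neighborFinset a).filter (fun v => G.degree v = 3)).card = 2) :
    (∀ b ∈ G.neighborFinset a, G.degree b ≠ 3 → G.degree b = 4) ∧
      (∀ e ∈ G.edgeFinset, ∃ v, v ∈ e ∧ (v = a ∨ G.Adj a v)) := by
  classical
  set S := G.neighborFinset a with hS
  have hScard : S.card = 6 := by rw [hS, G.card_neighborFinset_eq_degree, ha]
  -- independence of S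
  have hind : ∀ b ∈ S, ∀ c ∈ S, ¬ G.Adj b c := by
    intro b hb c hc hbc
    rw [hS, SimpleGraph.mem_neighborFinset] at hb hc
    exact htf {a, b, c} (SimpleGraph.is3Clique_triple_iff.2 ⟨hb, hc, hbc⟩)
  -- disjoint incidence finsets
  have hdisj : (↑S : Set V).PairwiseDisjoint (fun b => G.incidenceFinset b) := by
    intro b hb c hc hbc
    simp only [Finset.disjoint_left]
    intro e heb hec
    rw [SimpleGraph.mem_incidenceFinset] at heb hec
    have := G.incidenceSet_inter_incidenceSet_subset hbc ⟨heb, hec⟩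
    simp only [Set.mem_singleton_iff] at this
    subst this
    exact hind b hb c hc (heb.1)
  have hsubset : S.biUnion (fun b => G.incidenceFinset b) ⊆ G.edgeFinset := by
    intro e he
    obtain ⟨b, _, heb⟩ := Finset.mem_biUnion.1 he
    rw [SimpleGraph.mem_incidenceFinset] at heb
    exact SimpleGraph.mem_edgeFinset.2 heb.1
  have hcardU : (S.biUnion (fun b => G.incidenceFinset b)).card
      = ∑ b ∈ S, G.degree b := by
    rw [Finset.card_biUnion (fun b hb c hc hbc => hdisj hb hc hbc)]
    exact Finset.sum_congr rfl fun b _ => G.card_incidenceFinset_eq_degree b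
  have hle : ∑ b ∈ S, G.degree b ≤ 22 := by
    rw [← hcardU, ← hcard]
    exact Finset.card_le_card hsubset
  -- split the sum
  have hsplit : ∑ b ∈ S.filter (fun v => G.degree v = 3), G.degree b
      + ∑ b ∈ S.filter (fun v => ¬ G.degree v = 3), G.degree b
      = ∑ b ∈ S, G.degree b := Finset.sum_filter_add_sum_filter_not S _ _
  have hsum3 : ∑ b ∈ S.filter (fun v => G.degree v = 3), G.degree b = 6 := by
    rw [Finset.sum_congr rfl (fun b hb => (Finset.mem_filter.1 hb).2)]
    simp [h3]
  have hcardN : (S.filter (fun v => ¬ G.degree v = 3)).card = 4 := by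
    have := Finset.card_filter_add_card_filter_not (s := S)
      (p := fun v => G.degree v = 3)
    omega
  have hge4 : ∀ b ∈ S.filter (fun v => ¬ G.degree v = 3), 4 ≤ G.degree b := by
    intro b hb
    have := hmin b
    have := (Finset.mem_filter.1 hb).2
    omega
  have hsumN_ge : 16 ≤ ∑ b ∈ S.filter (fun v => ¬ G.degree v = 3), G.degree b := by
    calc 16 = ∑ _b ∈ S.filter (fun v => ¬ G.degree v = 3), 4 := by
            rw [Finset.sum_const, hcardN, smul_eq_mul]
      _ ≤ _ := Finset.sum_le_sum hge4
  have hsumN : ∑ b ∈ S.filter (fun v => ¬ G.degree v = 3), G.degree b = 16 := by omega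
  have hsumS : ∑ b ∈ S, G.degree b = 22 := by omega
  constructor
  · intro b hb hb3
    by_contra hb4
    have hbmem : b ∈ S.filter (fun v => ¬ G.degree v = 3) :=
      Finset.mem_filter.2 ⟨hb, hb3⟩
    have : (16 : ℕ) < ∑ b ∈ S.filter (fun v => ¬ G.degree v = 3), G.degree b := by
      calc (16 : ℕ) = ∑ _b ∈ S.filter (fun v => ¬ G.degree v = 3), 4 := by
              rw [Finset.sum_const, hcardN, smul_eq_mul]
        _ < _ := Finset.sum_lt_sum hge4 ⟨b, hbmem, by have := hge4 b hbmem; omega⟩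
    omega
  · intro e he
    have hequ : S.biUnion (fun b => G.incidenceFinset b) = G.edgeFinset := by
      apply Finset.eq_of_subset_of_card_le hsubset
      rw [hcardU, hcard, hsumS]
    rw [← hequ] at he
    obtain ⟨b, hb, heb⟩ := Finset.mem_biUnion.1 he
    rw [SimpleGraph.mem_incidenceFinset] at heb
    exact ⟨b, heb.2, Or.inr ((SimpleGraph.mem_neighborFinset _ _ _).1 hb)⟩
end

section
/- Let G be a finite simple graph that is triangle-free, has exactly 22 edges, and in which every vertex has degree at least 3. Suppose a and b are distinct nonadjacent vertices with deg(a) = deg(b) = 5 that have no common neighbor. Then at least 3 neighbors of a have degree exactly 3, and at least 3 neighbors of b have degree exactly 3. -/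
open Finset

private lemma aux_stmt7 {V : Type*} [Fintype V] [DecidableEq V] (G : SimpleGraph V)
    [DecidableRel G.Adj]
    (htf : G.CliqueFree 3)
    (hcard : G.edgeFinset.card = 22)
    (hmin : ∀ v : V, 3 ≤ G.degree v)
    (a b : V) (hab : a ≠ b) (hnadj : ¬ G.Adj a b)
    (hda : G.degree a = 5) (hdb : G.degree b = 5)
    (hnc : ∀ c : V, ¬ (G.Adj a c ∧ G.Adj b c)) :
    3 ≤ ((G.neighborFinset a).filter (fun v => G.degree v = 3)).card := by
  by_contra hcon
  push_neg at hcon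
  set A := G.neighborFinset a with hA
  set B := G.neighborFinset b with hB
  have hA5 : A.card = 5 := by rw [hA, G.card_neighborFinset_eq_degree, hda]
  have hB5 : B.card = 5 := by rw [hB, G.card_neighborFinset_eq_degree, hdb]
  have hmemA : ∀ v, v ∈ A ↔ G.Adj a v := fun v => G.mem_neighborFinset a v
  have hmemB : ∀ v, v ∈ B ↔ G.Adj b v := fun v => G.mem_neighborFinset b v
  have htri : ∀ x y z : V, G.Adj x y → G.Adj x z → ¬ G.Adj y z := by
    intro x y z h1 h2 h3
    exact htf {x, y, z} (SimpleGraph.is3Clique_triple_iff.2 ⟨h1, h2, h3⟩)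
  have hdisj : Disjoint A B := by
    rw [Finset.disjoint_left]
    intro v hv hv'
    exact hnc v ⟨(hmemA v).1 hv, (hmemB v).1 hv'⟩
  have haA : a ∉ A := by simp [hmemA]
  have haB : a ∉ B := by
    simp only [hmemB]
    exact fun h => hnadj h.symm
  have hbA : b ∉ A := by
    simp only [hmemA]
    exact hnadj
  have hbB : b ∉ B := by simp [hmemB]
  have hsum : ∑ v, G.degree v = 44 := by
    rw [G.sum_degrees_eq_twice_card_edges, hcard]
  set C : Finset V := insert a (insert b (A ∪ B)) with hC
  have hsumC : ∑ v ∈ C, G.degree v =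
      10 + (∑ v ∈ A, G.degree v + ∑ v ∈ B, G.degree v) := by
    rw [hC, Finset.sum_insert (by simp [haA, haB, hab]),
      Finset.sum_insert (by simp [hbA, hbB]),
      Finset.sum_union hdisj, hda, hdb]
    ring
  -- lower bound on sum over A
  have h4 : (A.filter (fun v => G.degree v = 3)).card
      + (A.filter (fun v => ¬ G.degree v = 3)).card = 5 := by
    rw [Finset.card_filter_add_card_filter_not, hA5]
  have h2 : ∑ v ∈ A.filter (fun v => G.degree v = 3), G.degree v
      = 3 * (A.filter (fun v => G.degree v = 3)).card := by
    rw [Finset.sum_congr rfl (fun v hv => (Finset.mem_filter.1 hv).2), Finset.sum_const,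
      smul_eq_mul, mul_comm]
  have h3 : (A.filter (fun v => ¬ G.degree v = 3)).card * 4
      ≤ ∑ v ∈ A.filter (fun v => ¬ G.degree v = 3), G.degree v := by
    rw [← smul_eq_mul]
    apply Finset.card_nsmul_le_sum
    intro v hv
    have h5 := hmin v
    have h6 := (Finset.mem_filter.1 hv).2
    omega
  have h1 := Finset.sum_filter_add_sum_filter_not A (fun v => G.degree v = 3) (fun v => G.degree v)
  have hSa : 18 ≤ ∑ v ∈ A, G.degree v := by omega
  have hSb : 15 ≤ ∑ v ∈ B, G.degree v := by
    calc (15 : ℕ) = B.card • 3 := by rw [hB5]; rfl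
    _ ≤ ∑ v ∈ B, G.degree v := Finset.card_nsmul_le_sum B _ 3 (fun v _ => hmin v)
  have hsplit : ∑ v ∈ Finset.univ \ C, G.degree v + ∑ v ∈ C, G.degree v = 44 := by
    rw [Finset.sum_sdiff (Finset.subset_univ C), hsum]
  rcases Finset.eq_empty_or_nonempty (Finset.univ \ C) with hRe | ⟨r, hr⟩
  · -- no other vertices: count cross edges
    have hCuniv : ∀ u : V, u ∈ C := by
      intro u
      have := Finset.sdiff_eq_empty_iff_subset.1 hRe (Finset.mem_univ u)
      exact this
    have hdegA : ∀ v ∈ A, G.degree v = 1 + (B.filter (fun u => G.Adj v u)).card := by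
      intro v hv
      have hav : G.Adj a v := (hmemA v).1 hv
      have hNv : G.neighborFinset v = insert a (B.filter (fun u => G.Adj v u)) := by
        ext u
        simp only [SimpleGraph.mem_neighborFinset, Finset.mem_insert, Finset.mem_filter]
        constructor
        · intro hvu
          by_cases hua : u = a
          · left; exact hua
          · right
            refine ⟨?_, hvu⟩
            have huC : u ∈ C := hCuniv u
            rw [hC] at huC
            simp only [Finset.mem_insert, Finset.mem_union] at huC
            rcases huC with rfl | rfl | huA | huB
            · exact absurd rfl hua
            · exact absurd ⟨hav, hvu.symm⟩ (hnc v)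
            · exact absurd hvu (htri a v u hav ((hmemA u).1 huA))
            · exact huB
        · rintro (rfl | ⟨hu, hvu⟩)
          · exact hav.symm
          · exact hvu
      rw [← G.card_neighborFinset_eq_degree, hNv,
        Finset.card_insert_of_notMem (by simp [haB])]
      omega
    have hdegB : ∀ v ∈ B, G.degree v = 1 + (A.filter (fun u => G.Adj v u)).card := by
      intro v hv
      have hbv : G.Adj b v := (hmemB v).1 hv
      have hNv : G.neighborFinset v = insert b (A.filter (fun u => G.Adj v u)) := by
        ext u
        simp only [SimpleGraph.mem_neighborFinset, Finset.mem_insert, Finset.mem_filter]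
        constructor
        · intro hvu
          by_cases hub : u = b
          · left; exact hub
          · right
            refine ⟨?_, hvu⟩
            have huC : u ∈ C := hCuniv u
            rw [hC] at huC
            simp only [Finset.mem_insert, Finset.mem_union] at huC
            rcases huC with rfl | rfl | huA | huB
            · exact absurd ⟨hvu.symm, hbv⟩ (hnc v)
            · exact absurd rfl hub
            · exact huA
            · exact absurd hvu (htri b v u hbv ((hmemB u).1 huB))
        · rintro (rfl | ⟨hu, hvu⟩)
          · exact hbv.symm
          · exact hvu
      rw [← G.card_neighborFinset_eq_degree, hNv,
        Finset.card_insert_of_notMem (by simp [hbA])]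
      omega
    have hswap : ∑ v ∈ A, (B.filter (fun u => G.Adj v u)).card
        = ∑ v ∈ B, (A.filter (fun u => G.Adj v u)).card := by
      simp only [Finset.card_filter]
      rw [Finset.sum_comm]
      refine Finset.sum_congr rfl (fun u _ => Finset.sum_congr rfl (fun v _ => ?_))
      simp [G.adj_comm]
    have hSaEq : ∑ v ∈ A, G.degree v
        = 5 + ∑ v ∈ A, (B.filter (fun u => G.Adj v u)).card := by
      rw [Finset.sum_congr rfl hdegA, Finset.sum_add_distrib, Finset.sum_const, hA5]
      simp
    have hSbEq : ∑ v ∈ B, G.degree v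
        = 5 + ∑ v ∈ B, (A.filter (fun u => G.Adj v u)).card := by
      rw [Finset.sum_congr rfl hdegB, Finset.sum_add_distrib, Finset.sum_const, hB5]
      simp
    rw [hRe] at hsplit
    simp only [Finset.sum_empty, zero_add] at hsplit
    omega
  · have hrdeg : 3 ≤ ∑ v ∈ Finset.univ \ C, G.degree v :=
      le_trans (hmin r) (Finset.single_le_sum (f := fun v => G.degree v) (fun v _ => Nat.zero_le _) hr)
    omega

theorem stmt_7 {V : Type*} [Fintype V] [DecidableEq V] (G : SimpleGraph V)
    [DecidableRel G.Adj]
    (htf : G.CliqueFree 3)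
    (hcard : G.edgeFinset.card = 22)
    (hmin : ∀ v : V, 3 ≤ G.degree v)
    (a b : V) (hab : a ≠ b) (hnadj : ¬ G.Adj a b)
    (hda : G.degree a = 5) (hdb : G.degree b = 5)
    (hnc : ∀ c : V, ¬ (G.Adj a c ∧ G.Adj b c)) :
    3 ≤ ((G.neighborFinset a).filter (fun v => G.degree v = 3)).card ∧
      3 ≤ ((G.neighborFinset b).filter (fun v => G.degree v = 3)).card := by
  refine ⟨aux_stmt7 G htf hcard hmin a b hab hnadj hda hdb hnc,
    aux_stmt7 G htf hcard hmin b a hab.symm (fun h => hnadj h.symm) hdb hda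
      (fun c hc => hnc c ⟨hc.2, hc.1⟩)⟩
end

section
/- Let G be a finite simple graph that is triangle-free, has exactly 22 edges, and in which every vertex has degree at least 3 and at most 5. Suppose a and b are distinct nonadjacent vertices with deg(a) = deg(b) = 5. Let y be the number of common neighbors of a and b having degree 4, z the number of common neighbors of a and b having degree 5, u the number of vertices adjacent to a but not to b having degree 3, and w the number of vertices adjacent to a but not to b having degree at least 4. Then y + u + 2(z + w) ≤ 7. -/
theorem stmt_8 {V : Type*} [Fintype V] [DecidableEq V] (G : SimpleGraph V)
    [DecidableRel G.Adj]
    (htf : G.CliqueFree 3)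
    (hcard : G.edgeFinset.card = 22)
    (hmin : ∀ v : V, 3 ≤ G.degree v)
    (hmax : ∀ v : V, G.degree v ≤ 5)
    (a b : V) (hab : a ≠ b) (hnadj : ¬ G.Adj a b)
    (hda : G.degree a = 5) (hdb : G.degree b = 5) :
    ((G.neighborFinset a ∩ G.neighborFinset b).filter (fun v => G.degree v = 4)).card
      + (((G.neighborFinset a) \ (G.neighborFinset b)).filter (fun v => G.degree v = 3)).card
      + 2 * (((G.neighborFinset a ∩ G.neighborFinset b).filter (fun v => G.degree v = 5)).card
        + (((G.neighborFinset a) \ (G.neighborFinset b)).filter (fun v => 4 ≤ G.degree v)).card)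
      ≤ 7 := by
  classical
  set Na := G.neighborFinset a with hNa
  set Nb := G.neighborFinset b with hNb
  set C := Na ∩ Nb with hCdef
  set D := Na \ Nb with hDdef
  have hbNa : b ∉ Na := by
    simp only [hNa, SimpleGraph.mem_neighborFinset]; exact hnadj
  have hind : ∀ v ∈ Na, ∀ w ∈ Na, ¬ G.Adj v w := by
    intro v hv w hw hvw
    exact htf {a, v, w} (SimpleGraph.is3Clique_triple_iff.2
      ⟨by simpa [hNa, SimpleGraph.mem_neighborFinset] using hv,
       by simpa [hNa, SimpleGraph.mem_neighborFinset] using hw, hvw⟩)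
  set T : Finset V := insert b Na with hT
  -- degree as incidence count
  have hdeg : ∀ v : V, G.degree v = (G.edgeFinset.filter (fun e => v ∈ e)).card := by
    intro v
    rw [← SimpleGraph.card_incidenceFinset_eq_degree]
    congr 1
    ext e
    simp [SimpleGraph.mem_incidenceFinset, SimpleGraph.incidenceSet,
      SimpleGraph.mem_edgeFinset]
  have hswap : ∑ v ∈ T, G.degree v
      = ∑ e ∈ G.edgeFinset, (T.filter (fun v => v ∈ e)).card := by
    simp only [hdeg, Finset.card_filter]
    exact Finset.sum_comm
  -- each edge contributes at most 1, plus 1 more if it is a b-C edge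
  have hkey : ∀ e ∈ G.edgeFinset,
      (T.filter (fun v => v ∈ e)).card
        ≤ 1 + (if e ∈ C.image (fun c => s(b, c)) then 1 else 0) := by
    intro e he
    induction e using Sym2.ind with
    | _ x y =>
      rw [SimpleGraph.mem_edgeFinset, SimpleGraph.mem_edgeSet] at he
      have hxy : x ≠ y := he.ne
      have hsub : T.filter (fun v => v ∈ s(x, y)) ⊆ {x, y} := by
        intro v hv
        simp only [Finset.mem_filter, Sym2.mem_iff] at hv
        simp [hv.2]
      by_cases hx : x ∈ T
      · by_cases hy : y ∈ T
        · -- both endpoints in T : must be b together with a common neighbor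
          have hmem : s(x, y) ∈ C.image (fun c => s(b, c)) := by
            have hx' : x = b ∨ x ∈ Na := by
              rcases Finset.mem_insert.1 hx with h | h
              · exact Or.inl h
              · exact Or.inr h
            have hy' : y = b ∨ y ∈ Na := by
              rcases Finset.mem_insert.1 hy with h | h
              · exact Or.inl h
              · exact Or.inr h
            rcases hx' with rfl | hxN
            · rcases hy' with rfl | hyN
              · exact absurd rfl hxy
              · have hyC : y ∈ C := by
                  rw [hCdef, Finset.mem_inter]
                  exact ⟨hyN, by rw [hNb, SimpleGraph.mem_neighborFinset]; exact he⟩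
                exact Finset.mem_image.2 ⟨y, hyC, rfl⟩
            · rcases hy' with rfl | hyN
              · have hxC : x ∈ C := by
                  rw [hCdef, Finset.mem_inter]
                  exact ⟨hxN, by rw [hNb, SimpleGraph.mem_neighborFinset]; exact he.symm⟩
                exact Finset.mem_image.2 ⟨x, hxC, Sym2.eq_swap⟩
              · exact absurd he (hind x hxN y hyN)
          rw [if_pos hmem]
          calc (T.filter (fun v => v ∈ s(x, y))).card ≤ ({x, y} : Finset V).card :=
                Finset.card_le_card hsub
            _ ≤ 2 := Finset.card_insert_le _ _ |>.trans (by simp)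
        · have : T.filter (fun v => v ∈ s(x, y)) ⊆ {x} := by
            intro v hv
            simp only [Finset.mem_filter, Sym2.mem_iff] at hv
            rcases hv.2 with rfl | rfl
            · simp
            · exact absurd hv.1 hy
          calc (T.filter (fun v => v ∈ s(x, y))).card ≤ ({x} : Finset V).card :=
                Finset.card_le_card this
            _ ≤ 1 + _ := by simp
      · have : T.filter (fun v => v ∈ s(x, y)) ⊆ {y} := by
          intro v hv
          simp only [Finset.mem_filter, Sym2.mem_iff] at hv
          rcases hv.2 with rfl | rfl
          · exact absurd hv.1 hx
          · simp
        calc (T.filter (fun v => v ∈ s(x, y))).card ≤ ({y} : Finset V).card :=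
              Finset.card_le_card this
          _ ≤ 1 + _ := by simp
  -- upper bound on the degree sum over T
  have hupper : ∑ v ∈ T, G.degree v ≤ 22 + C.card := by
    rw [hswap]
    calc ∑ e ∈ G.edgeFinset, (T.filter (fun v => v ∈ e)).card
        ≤ ∑ e ∈ G.edgeFinset,
            (1 + (if e ∈ C.image (fun c => s(b, c)) then 1 else 0)) :=
          Finset.sum_le_sum hkey
      _ = G.edgeFinset.card
            + ∑ e ∈ G.edgeFinset, (if e ∈ C.image (fun c => s(b, c)) then 1 else 0) := by
          rw [Finset.sum_add_distrib, Finset.sum_const, smul_eq_mul, mul_one]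
      _ ≤ 22 + C.card := by
          rw [hcard]
          gcongr
          calc ∑ e ∈ G.edgeFinset, (if e ∈ C.image (fun c => s(b, c)) then 1 else 0)
              = (G.edgeFinset.filter (fun e => e ∈ C.image (fun c => s(b, c)))).card := by
                rw [Finset.card_filter]
            _ ≤ (C.image (fun c => s(b, c))).card := by
                apply Finset.card_le_card
                intro e he
                exact (Finset.mem_filter.1 he).2
            _ ≤ C.card := Finset.card_image_le
  -- split the sum over T
  have hTsum : ∑ v ∈ T, G.degree v = G.degree b + ∑ v ∈ Na, G.degree v := by
    rw [hT, Finset.sum_insert hbNa]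
  -- split Na into C and D
  have hNasum : ∑ v ∈ C, G.degree v + ∑ v ∈ D, G.degree v = ∑ v ∈ Na, G.degree v := by
    have h1 : Na.filter (fun v => v ∈ Nb) = C := by
      rw [hCdef]; ext v; simp [Finset.mem_inter, Finset.mem_filter, and_comm]
    have h2 : Na.filter (fun v => ¬ v ∈ Nb) = D := by
      rw [hDdef]; ext v; simp [Finset.mem_sdiff, Finset.mem_filter]
    rw [← h1, ← h2, Finset.sum_filter_add_sum_filter_not]
  have hNacard : C.card + D.card = Na.card := by
    have h1 : Na.filter (fun v => v ∈ Nb) = C := by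
      rw [hCdef]; ext v; simp [Finset.mem_inter, Finset.mem_filter, and_comm]
    have h2 : Na.filter (fun v => ¬ v ∈ Nb) = D := by
      rw [hDdef]; ext v; simp [Finset.mem_sdiff, Finset.mem_filter]
    rw [← h1, ← h2, Finset.card_filter_add_card_filter_not]
  have hNa5 : Na.card = 5 := by
    rw [hNa, SimpleGraph.card_neighborFinset_eq_degree, hda]
  -- split C by degree
  set x := (C.filter (fun v => G.degree v = 3)).card with hx
  set y := (C.filter (fun v => G.degree v = 4)).card with hy
  set z := (C.filter (fun v => G.degree v = 5)).card with hz
  set u := (D.filter (fun v => G.degree v = 3)).card with hu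
  set w := (D.filter (fun v => 4 ≤ G.degree v)).card with hw
  have hCsplit : C.filter (fun v => ¬ G.degree v = 3) = C.filter (fun v => G.degree v = 4)
      ∪ C.filter (fun v => G.degree v = 5) := by
    ext v
    simp only [Finset.mem_filter, Finset.mem_union]
    have h1 := hmin v; have h2 := hmax v
    constructor
    · rintro ⟨hv, h⟩
      rcases Nat.lt_or_ge (G.degree v) 5 with h' | h'
      · exact Or.inl ⟨hv, by omega⟩
      · exact Or.inr ⟨hv, by omega⟩
    · rintro (⟨hv, h⟩ | ⟨hv, h⟩) <;> exact ⟨hv, by omega⟩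
  have hCdisj : Disjoint (C.filter (fun v => G.degree v = 4))
      (C.filter (fun v => G.degree v = 5)) := by
    rw [Finset.disjoint_filter]
    intro v _ h4 h5
    omega
  have hCsum : ∑ v ∈ C, G.degree v = 3 * x + (4 * y + 5 * z) := by
    rw [← Finset.sum_filter_add_sum_filter_not C (fun v => G.degree v = 3)]
    congr 1
    · rw [Finset.sum_const_nat (fun v hv => (Finset.mem_filter.1 hv).2), hx, Nat.mul_comm]
    · rw [hCsplit, Finset.sum_union hCdisj]
      congr 1
      · rw [Finset.sum_const_nat (fun v hv => (Finset.mem_filter.1 hv).2), hy, Nat.mul_comm]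
      · rw [Finset.sum_const_nat (fun v hv => (Finset.mem_filter.1 hv).2), hz, Nat.mul_comm]
  have hCcard : C.card = x + y + z := by
    rw [← Finset.card_filter_add_card_filter_not (s := C) (fun v => G.degree v = 3),
      hCsplit, Finset.card_union_of_disjoint hCdisj, ← hx, ← hy, ← hz]
    ring
  -- split D by degree
  have hDsplit : D.filter (fun v => ¬ G.degree v = 3) = D.filter (fun v => 4 ≤ G.degree v) := by
    ext v
    simp only [Finset.mem_filter]
    have := hmin v
    constructor
    · rintro ⟨hv, h⟩; exact ⟨hv, by omega⟩
    · rintro ⟨hv, h⟩; exact ⟨hv, by omega⟩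
  have hDsum : 3 * u + 4 * w ≤ ∑ v ∈ D, G.degree v := by
    rw [← Finset.sum_filter_add_sum_filter_not D (fun v => G.degree v = 3)]
    apply Nat.add_le_add
    · rw [Finset.sum_const_nat (fun v hv => (Finset.mem_filter.1 hv).2), hu, Nat.mul_comm]
    · rw [hDsplit]
      have := Finset.card_nsmul_le_sum (D.filter (fun v => 4 ≤ G.degree v)) (fun v => G.degree v) 4
        (by intro v hv; exact (Finset.mem_filter.1 hv).2)
      simpa [hw, Nat.mul_comm, smul_eq_mul] using this
  have hDcard : u + w = D.card := by
    rw [← Finset.card_filter_add_card_filter_not (s := D) (fun v => G.degree v = 3),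
      hDsplit, ← hu, ← hw]
  -- put everything together
  have hfinal : 5 + (3 * x + (4 * y + 5 * z) + (3 * u + 4 * w)) ≤ 22 + (x + y + z) := by
    calc 5 + (3 * x + (4 * y + 5 * z) + (3 * u + 4 * w))
        ≤ G.degree b + (∑ v ∈ C, G.degree v + ∑ v ∈ D, G.degree v) := by
          rw [hdb, hCsum]
          exact Nat.add_le_add_left (Nat.add_le_add_left hDsum _) _
      _ = ∑ v ∈ T, G.degree v := by rw [hTsum, hNasum]
      _ ≤ 22 + C.card := hupper
      _ = 22 + (x + y + z) := by rw [hCcard]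
  omega
end

section
/- Let G be a finite simple graph that is triangle-free, has exactly 22 edges, and in which every vertex has degree at least 3 and at most 5. Suppose a and b are distinct nonadjacent vertices with deg(a) = deg(b) = 5. Let x be the number of common neighbors of a and b having degree 3, y the number of common neighbors of a and b having degree 4, and u the number of vertices adjacent to a but not to b having degree 3. Then x + y + u ≥ 2. -/
open Finset

theorem stmt_9 {V : Type*} [Fintype V] [DecidableEq V] (G : SimpleGraph V)
    [DecidableRel G.Adj]
    (htf : G.CliqueFree 3)
    (hcard : G.edgeFinset.card = 22)
    (hmin : ∀ v : V, 3 ≤ G.degree v)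
    (hmax : ∀ v : V, G.degree v ≤ 5)
    (a b : V) (hab : a ≠ b) (hnadj : ¬ G.Adj a b)
    (hda : G.degree a = 5) (hdb : G.degree b = 5) :
    2 ≤ ((G.neighborFinset a ∩ G.neighborFinset b).filter (fun v => G.degree v = 3)).card
      + ((G.neighborFinset a ∩ G.neighborFinset b).filter (fun v => G.degree v = 4)).card
      + (((G.neighborFinset a) \ (G.neighborFinset b)).filter (fun v => G.degree v = 3)).card := by
  classical
  set Na := G.neighborFinset a with hNa
  set Nb := G.neighborFinset b with hNb
  -- independence of N(a)
  have hind : ∀ v ∈ Na, ∀ w ∈ Na, ¬ G.Adj v w := by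
    intro v hv w hw hvw
    have hav : G.Adj a v := (G.mem_neighborFinset a v).mp hv
    have haw : G.Adj a w := (G.mem_neighborFinset a w).mp hw
    exact htf {a, v, w} (SimpleGraph.is3Clique_triple_iff.mpr ⟨hav, haw, hvw⟩)
  have hbNa : b ∉ Na := by
    simp [hNa, SimpleGraph.mem_neighborFinset]
    exact hnadj
  -- total degree
  have hsum : ∑ v, G.degree v = 44 := by
    rw [G.sum_degrees_eq_twice_card_edges, hcard]
  have hsplit : (∑ v ∈ Na, G.degree v) + (∑ v ∈ Naᶜ, G.degree v) = 44 := by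
    rw [Finset.sum_add_sum_compl, hsum]
  -- double counting: S1
  have hS1 : ∑ v ∈ Na, G.degree v = ∑ w ∈ Naᶜ, (Na ∩ G.neighborFinset w).card := by
    have h1 : ∀ v ∈ Na, G.degree v = ∑ w ∈ Naᶜ, (if G.Adj v w then 1 else 0) := by
      intro v hv
      rw [← SimpleGraph.card_neighborFinset_eq_degree]
      have : G.neighborFinset v = Naᶜ.filter (fun w => G.Adj v w) := by
        ext w
        simp only [SimpleGraph.mem_neighborFinset, mem_filter, Finset.mem_compl]
        exact ⟨fun h => ⟨fun hw => hind v hv w hw h, h⟩, fun h => h.2⟩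
      rw [this, Finset.card_filter]
    rw [Finset.sum_congr rfl h1, Finset.sum_comm]
    apply Finset.sum_congr rfl
    intro w _
    have : Na ∩ G.neighborFinset w = Na.filter (fun v => G.Adj v w) := by
      ext v
      simp only [mem_inter, mem_filter, SimpleGraph.mem_neighborFinset]
      exact ⟨fun ⟨h1, h2⟩ => ⟨h1, h2.symm⟩, fun ⟨h1, h2⟩ => ⟨h1, h2.symm⟩⟩
    rw [this, Finset.card_filter]
  -- S2 decomposition
  have hS2 : ∑ w ∈ Naᶜ, G.degree w
      = (∑ w ∈ Naᶜ, (Na ∩ G.neighborFinset w).card)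
        + ∑ w ∈ Naᶜ, (G.neighborFinset w \ Na).card := by
    rw [← Finset.sum_add_distrib]
    apply Finset.sum_congr rfl
    intro w _
    rw [← SimpleGraph.card_neighborFinset_eq_degree, Finset.inter_comm]
    exact (Finset.card_inter_add_card_sdiff _ _).symm
  -- lower bound for T
  have hT : 2 * (Nb \ Na).card ≤ ∑ w ∈ Naᶜ, (G.neighborFinset w \ Na).card := by
    have hbB : b ∉ Nb \ Na := by
      simp [hNb, SimpleGraph.mem_neighborFinset]
    have hsub : insert b (Nb \ Na) ⊆ Naᶜ := by
      intro w hw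
      rw [Finset.mem_insert] at hw
      rcases hw with rfl | hw
      · exact Finset.mem_compl.mpr hbNa
      · exact Finset.mem_compl.mpr (Finset.mem_sdiff.mp hw).2
    calc 2 * (Nb \ Na).card = (Nb \ Na).card + ∑ w ∈ Nb \ Na, 1 := by
          rw [Finset.sum_const, smul_eq_mul, mul_one]; ring
      _ ≤ (G.neighborFinset b \ Na).card + ∑ w ∈ Nb \ Na, (G.neighborFinset w \ Na).card := by
          apply Nat.add_le_add
          · exact le_of_eq rfl
          · apply Finset.sum_le_sum
            intro w hw
            have hw' := Finset.mem_sdiff.mp hw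
            have : b ∈ G.neighborFinset w \ Na := by
              rw [Finset.mem_sdiff, SimpleGraph.mem_neighborFinset]
              exact ⟨((G.mem_neighborFinset b w).mp hw'.1).symm, hbNa⟩
            exact Finset.card_pos.mpr ⟨b, this⟩
      _ = ∑ w ∈ insert b (Nb \ Na), (G.neighborFinset w \ Na).card := by
          rw [Finset.sum_insert hbB]
      _ ≤ ∑ w ∈ Naᶜ, (G.neighborFinset w \ Na).card := by
          apply Finset.sum_le_sum_of_subset hsub
  -- degree lower bounds on Na
  set x := ((Na ∩ Nb).filter (fun v => G.degree v = 3)).card with hx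
  set y := ((Na ∩ Nb).filter (fun v => G.degree v = 4)).card with hy
  set u := ((Na \ Nb).filter (fun v => G.degree v = 3)).card with hu
  have hC : (∑ v ∈ Na ∩ Nb, G.degree v) + (2 * x + y) ≥ 5 * (Na ∩ Nb).card := by
    have : 2 * x + y = ∑ v ∈ Na ∩ Nb,
        ((if G.degree v = 3 then 2 else 0) + (if G.degree v = 4 then 1 else 0)) := by
      rw [hx, hy, Finset.card_filter, Finset.card_filter, Finset.mul_sum,
        ← Finset.sum_add_distrib]
      apply Finset.sum_congr rfl
      intro v _
      split_ifs <;> ring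
    rw [this, ← Finset.sum_add_distrib]
    calc 5 * (Na ∩ Nb).card = ∑ v ∈ Na ∩ Nb, 5 := by
          rw [Finset.sum_const, smul_eq_mul, mul_comm]
      _ ≤ _ := by
          apply Finset.sum_le_sum
          intro v _
          have h1 := hmin v
          have h2 := hmax v
          split_ifs <;> omega
  have hA : (∑ v ∈ Na \ Nb, G.degree v) + u ≥ 4 * (Na \ Nb).card := by
    have : u = ∑ v ∈ Na \ Nb, (if G.degree v = 3 then 1 else 0) := by
      rw [hu, Finset.card_filter]
    rw [this, ← Finset.sum_add_distrib]
    calc 4 * (Na \ Nb).card = ∑ v ∈ Na \ Nb, 4 := by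
          rw [Finset.sum_const, smul_eq_mul, mul_comm]
      _ ≤ _ := by
          apply Finset.sum_le_sum
          intro v _
          have h1 := hmin v
          have h2 := hmax v
          split_ifs <;> omega
  have hsplitNa : (∑ v ∈ Na ∩ Nb, G.degree v) + (∑ v ∈ Na \ Nb, G.degree v)
      = ∑ v ∈ Na, G.degree v := Finset.sum_inter_add_sum_sdiff Na Nb _
  have hcardNa : (Na ∩ Nb).card + (Na \ Nb).card = 5 := by
    rw [Finset.card_inter_add_card_sdiff]
    rw [hNa, SimpleGraph.card_neighborFinset_eq_degree, hda]
  have hcardNb : (Na ∩ Nb).card + (Nb \ Na).card = 5 := by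
    rw [Finset.inter_comm, Finset.card_inter_add_card_sdiff]
    rw [hNb, SimpleGraph.card_neighborFinset_eq_degree, hdb]
  omega
end

section
/- There is no finite simple graph G satisfying all of the following: G is triangle-free; G has exactly 22 edges; every vertex of G has degree at least 3; G has exactly two vertices a and b of degree 5 and every other vertex has degree 3 or 4; a and b are adjacent; every neighbor of a other than b has degree 4; and every neighbor of b other than a has degree 4. -/
theorem stmt_11 {V : Type*} [Fintype V] [DecidableEq V] (G : SimpleGraph V)
    [DecidableRel G.Adj]
    (htf : G.CliqueFree 3)
    (hcard : G.edgeFinset.card = 22)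
    (hmin : ∀ v : V, 3 ≤ G.degree v)
    (a b : V) (hab : a ≠ b)
    (hda : G.degree a = 5) (hdb : G.degree b = 5)
    (hother : ∀ v : V, v ≠ a → v ≠ b → G.degree v = 3 ∨ G.degree v = 4)
    (hadj : G.Adj a b)
    (hna : ∀ c : V, G.Adj a c → c ≠ b → G.degree c = 4)
    (hnb : ∀ c : V, G.Adj b c → c ≠ a → G.degree c = 4) :
    False := by
  classical
  have hdisj : Disjoint (G.neighborFinset a) (G.neighborFinset b) := by
    rw [Finset.disjoint_left]
    intro c hca hcb
    rw [SimpleGraph.mem_neighborFinset] at hca hcb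
    exact htf {a, b, c} (SimpleGraph.is3Clique_triple_iff.mpr ⟨hadj, hca, hcb⟩)
  have hba : b ∈ G.neighborFinset a := (SimpleGraph.mem_neighborFinset ..).mpr hadj
  have hab' : a ∈ G.neighborFinset b := (SimpleGraph.mem_neighborFinset ..).mpr hadj.symm
  have hcardA : (G.neighborFinset a).card = 5 := by
    rw [SimpleGraph.card_neighborFinset_eq_degree]; exact hda
  have hcardB : (G.neighborFinset b).card = 5 := by
    rw [SimpleGraph.card_neighborFinset_eq_degree]; exact hdb
  have hsumA : ∑ v ∈ G.neighborFinset a, G.degree v = 21 := by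
    rw [← Finset.add_sum_erase _ _ hba, hdb]
    have h4 : ∑ v ∈ (G.neighborFinset a).erase b, G.degree v
        = ∑ _v ∈ (G.neighborFinset a).erase b, 4 := by
      apply Finset.sum_congr rfl
      intro v hv
      exact hna v ((SimpleGraph.mem_neighborFinset ..).mp (Finset.mem_of_mem_erase hv))
        (Finset.ne_of_mem_erase hv)
    rw [h4, Finset.sum_const, Finset.card_erase_of_mem hba, hcardA]; rfl
  have hsumB : ∑ v ∈ G.neighborFinset b, G.degree v = 21 := by
    rw [← Finset.add_sum_erase _ _ hab', hda]
    have h4 : ∑ v ∈ (G.neighborFinset b).erase a, G.degree v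
        = ∑ _v ∈ (G.neighborFinset b).erase a, 4 := by
      apply Finset.sum_congr rfl
      intro v hv
      exact hnb v ((SimpleGraph.mem_neighborFinset ..).mp (Finset.mem_of_mem_erase hv))
        (Finset.ne_of_mem_erase hv)
    rw [h4, Finset.sum_const, Finset.card_erase_of_mem hab', hcardB]; rfl
  set T := G.neighborFinset a ∪ G.neighborFinset b with hT
  have hsumT : ∑ v ∈ T, G.degree v = 42 := by
    rw [hT, Finset.sum_union hdisj, hsumA, hsumB]
  have htotal : ∑ v : V, G.degree v = 44 := by
    rw [G.sum_degrees_eq_twice_card_edges, hcard]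
  have hsplit : ∑ v : V, G.degree v
      = ∑ v ∈ T, G.degree v + ∑ v ∈ Finset.univ \ T, G.degree v := by
    rw [← Finset.sum_union (Finset.disjoint_sdiff),
      Finset.union_sdiff_of_subset (Finset.subset_univ T)]
  have hrest : ∑ v ∈ Finset.univ \ T, G.degree v = 2 := by omega
  rcases (Finset.univ \ T).eq_empty_or_nonempty with he | ⟨v, hv⟩
  · rw [he, Finset.sum_empty] at hrest; omega
  · have hle : G.degree v ≤ ∑ x ∈ Finset.univ \ T, G.degree x :=
      Finset.single_le_sum (f := fun v => G.degree v) (fun i _ => Nat.zero_le _) hv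
    have := hmin v
    omega
end

section
/- There is no finite simple graph G satisfying all of the following: G is triangle-free; G has exactly 22 edges; every vertex of G has degree at least 3 and at most 5; G has two distinct nonadjacent vertices a and b with deg(a) = deg(b) = 5; a and b have at most four common neighbors; exactly one common neighbor of a and b has degree 3 and exactly two common neighbors of a and b have degree 4; every vertex adjacent to a but not to b has degree at least 4; and every vertex adjacent to b but not to a has degree at least 4. -/
open Finset

set_option maxHeartbeats 1000000

theorem stmt_13 {V : Type*} [Fintype V] [DecidableEq V] (G : SimpleGraph V)
    [DecidableRel G.Adj]
    (htf : G.CliqueFree 3)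
    (hcard : G.edgeFinset.card = 22)
    (hmin : ∀ v : V, 3 ≤ G.degree v)
    (hmax : ∀ v : V, G.degree v ≤ 5)
    (a b : V) (hab : a ≠ b) (hnadj : ¬ G.Adj a b)
    (hda : G.degree a = 5) (hdb : G.degree b = 5)
    (hcn : (G.neighborFinset a ∩ G.neighborFinset b).card ≤ 4)
    (hx : ((G.neighborFinset a ∩ G.neighborFinset b).filter (fun v => G.degree v = 3)).card = 1)
    (hy : ((G.neighborFinset a ∩ G.neighborFinset b).filter (fun v => G.degree v = 4)).card = 2)
    (hua : ∀ v ∈ (G.neighborFinset a) \ (G.neighborFinset b), 4 ≤ G.degree v)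
    (hub : ∀ v ∈ (G.neighborFinset b) \ (G.neighborFinset a), 4 ≤ G.degree v) :
    False := by
  classical
  set Na := G.neighborFinset a with hNa
  set Nb := G.neighborFinset b with hNb
  set C := Na ∩ Nb with hCdef
  set A := Na \ Nb with hAdef
  set B := Nb \ Na with hBdef
  set P : Finset V := {a, b} with hPdef
  set R := (P ∪ Na ∪ Nb)ᶜ with hRdef
  have notri : ∀ {x y z : V}, G.Adj x y → G.Adj x z → G.Adj y z → False := by
    intro x y z h1 h2 h3
    exact htf {x, y, z} (SimpleGraph.is3Clique_triple_iff.2 ⟨h1, h2, h3⟩)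
  have memNa : ∀ x, x ∈ Na ↔ G.Adj a x := by
    intro x; rw [hNa, SimpleGraph.mem_neighborFinset]
  have memNb : ∀ x, x ∈ Nb ↔ G.Adj b x := by
    intro x; rw [hNb, SimpleGraph.mem_neighborFinset]
  have hana : a ∉ Na := by rw [memNa]; exact G.irrefl
  have hanb : a ∉ Nb := by rw [memNb]; exact fun h => hnadj h.symm
  have hbna : b ∉ Na := by rw [memNa]; exact hnadj
  have hbnb : b ∉ Nb := by rw [memNb]; exact G.irrefl
  have memP : ∀ x, x ∈ P ↔ x = a ∨ x = b := by
    intro x; rw [hPdef]; simp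
  have memC : ∀ x, x ∈ C ↔ x ∈ Na ∧ x ∈ Nb := by intro x; rw [hCdef, mem_inter]
  have memA : ∀ x, x ∈ A ↔ x ∈ Na ∧ x ∉ Nb := by intro x; rw [hAdef, mem_sdiff]
  have memB : ∀ x, x ∈ B ↔ x ∈ Nb ∧ x ∉ Na := by intro x; rw [hBdef, mem_sdiff]
  have memR : ∀ x, x ∈ R ↔ ¬(x ∈ P ∨ x ∈ Na ∨ x ∈ Nb) := by
    intro x; rw [hRdef, mem_compl, mem_union, mem_union, or_assoc]
  -- disjointness
  have dPC : Disjoint P (C ∪ (A ∪ (B ∪ R))) := by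
    rw [Finset.disjoint_left]
    intro x hx1 hx2
    rw [memP] at hx1
    rw [mem_union, mem_union, mem_union, memC, memA, memB, memR, memP] at hx2
    rcases hx1 with rfl | rfl <;>
      rcases hx2 with ⟨h, -⟩ | ⟨h, -⟩ | ⟨h, -⟩ | h
    · exact hana h
    · exact hana h
    · exact hanb h
    · exact h (Or.inl (Or.inl rfl))
    · exact hbna h
    · exact hbna h
    · exact hbnb h
    · exact h (Or.inl (Or.inr rfl))
  have dCA : Disjoint C (A ∪ (B ∪ R)) := by
    rw [Finset.disjoint_left]
    intro x hx1 hx2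
    rw [memC] at hx1
    rw [mem_union, mem_union, memA, memB, memR] at hx2
    rcases hx2 with ⟨-, h⟩ | ⟨-, h⟩ | h
    · exact h hx1.2
    · exact h hx1.1
    · exact h (Or.inr (Or.inl hx1.1))
  have dAB : Disjoint A (B ∪ R) := by
    rw [Finset.disjoint_left]
    intro x hx1 hx2
    rw [memA] at hx1
    rw [mem_union, memB, memR] at hx2
    rcases hx2 with ⟨h, -⟩ | h
    · exact hx1.2 h
    · exact h (Or.inr (Or.inl hx1.1))
  have dBR : Disjoint B R := by
    rw [Finset.disjoint_left]
    intro x hx1 hx2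
    rw [memB] at hx1
    rw [memR] at hx2
    exact hx2 (Or.inr (Or.inr hx1.1))
  have hU : (univ : Finset V) = P ∪ (C ∪ (A ∪ (B ∪ R))) := by
    ext x
    simp only [mem_univ, true_iff, mem_union, memC x, memA x, memB x, memR x]
    by_cases h1 : x ∈ Na
    · by_cases h2 : x ∈ Nb
      · exact Or.inr (Or.inl ⟨h1, h2⟩)
      · exact Or.inr (Or.inr (Or.inl ⟨h1, h2⟩))
    · by_cases h2 : x ∈ Nb
      · exact Or.inr (Or.inr (Or.inr (Or.inl ⟨h2, h1⟩)))
      · by_cases hp : x ∈ P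
        · exact Or.inl hp
        · refine Or.inr (Or.inr (Or.inr (Or.inr ?_)))
          rintro (h | h | h)
          exacts [hp h, h1 h, h2 h]
  -- cardinality splitting
  have key : ∀ s : Finset V, s.card =
      (s ∩ P).card + ((s ∩ C).card + ((s ∩ A).card + ((s ∩ B).card + (s ∩ R).card))) := by
    intro s
    conv_lhs => rw [← Finset.inter_univ s, hU]
    rw [Finset.inter_union_distrib_left, Finset.inter_union_distrib_left,
      Finset.inter_union_distrib_left, Finset.inter_union_distrib_left]
    have m1 : s ∩ B ∪ s ∩ R ⊆ B ∪ R :=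
      union_subset_union inter_subset_right inter_subset_right
    have m2 : s ∩ A ∪ (s ∩ B ∪ s ∩ R) ⊆ A ∪ (B ∪ R) :=
      union_subset_union inter_subset_right m1
    have m3 : s ∩ C ∪ (s ∩ A ∪ (s ∩ B ∪ s ∩ R)) ⊆ C ∪ (A ∪ (B ∪ R)) :=
      union_subset_union inter_subset_right m2
    rw [Finset.card_union_of_disjoint (dPC.mono inter_subset_right m3),
      Finset.card_union_of_disjoint (dCA.mono inter_subset_right m2),
      Finset.card_union_of_disjoint (dAB.mono inter_subset_right m1),
      Finset.card_union_of_disjoint (dBR.mono inter_subset_right inter_subset_right)]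
  -- sum splitting
  have sumsplit : (∑ v, G.degree v) =
      (∑ v ∈ P, G.degree v) + ((∑ v ∈ C, G.degree v) + ((∑ v ∈ A, G.degree v) +
        ((∑ v ∈ B, G.degree v) + ∑ v ∈ R, G.degree v))) := by
    rw [show (univ : Finset V) = _ from hU, Finset.sum_union dPC, Finset.sum_union dCA,
      Finset.sum_union dAB, Finset.sum_union dBR]
  -- double counting
  have dbl : ∀ s t : Finset V, (∑ v ∈ s, (G.neighborFinset v ∩ t).card)
      = ∑ w ∈ t, (G.neighborFinset w ∩ s).card := by
    intro s t
    have h : ∀ (u : Finset V) (v : V), (G.neighborFinset v ∩ u).card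
        = ∑ w ∈ u, if G.Adj v w then 1 else 0 := by
      intro u v
      rw [show G.neighborFinset v ∩ u = u.filter (fun w => G.Adj v w) by
        ext x; simp [SimpleGraph.mem_neighborFinset, and_comm], Finset.card_filter]
    simp only [h]
    rw [Finset.sum_comm]
    exact Finset.sum_congr rfl fun w _ => Finset.sum_congr rfl fun v _ =>
      if_congr (G.adj_comm v w) rfl rfl
  -- degree formulas
  have degnf : ∀ v : V, G.degree v = (G.neighborFinset v).card := fun v => rfl
  have hdegA : ∀ v ∈ A, G.degree v =
      1 + (0 + (0 + ((G.neighborFinset v ∩ B).card + (G.neighborFinset v ∩ R).card))) := by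
    intro v hv
    rw [memA] at hv
    have hva : G.Adj a v := (memNa v).1 hv.1
    have h1 : G.neighborFinset v ∩ P = {a} := by
      ext x
      rw [mem_inter, SimpleGraph.mem_neighborFinset, memP, mem_singleton]
      constructor
      · rintro ⟨hadj, rfl | rfl⟩
        · rfl
        · exact absurd ((memNb v).2 hadj.symm) hv.2
      · rintro rfl; exact ⟨hva.symm, Or.inl rfl⟩
    have h2 : G.neighborFinset v ∩ C = ∅ := by
      rw [Finset.eq_empty_iff_forall_notMem]
      intro x hx
      rw [mem_inter, SimpleGraph.mem_neighborFinset, memC, memNa, memNb] at hx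
      exact notri hva hx.2.1 hx.1
    have h3 : G.neighborFinset v ∩ A = ∅ := by
      rw [Finset.eq_empty_iff_forall_notMem]
      intro x hx
      rw [mem_inter, SimpleGraph.mem_neighborFinset, memA, memNa] at hx
      exact notri hva hx.2.1 hx.1
    rw [degnf, key (G.neighborFinset v), h1, h2, h3]
    simp
  have hdegB : ∀ v ∈ B, G.degree v =
      1 + (0 + ((G.neighborFinset v ∩ A).card + (0 + (G.neighborFinset v ∩ R).card))) := by
    intro v hv
    rw [memB] at hv
    have hvb : G.Adj b v := (memNb v).1 hv.1
    have h1 : G.neighborFinset v ∩ P = {b} := by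
      ext x
      rw [mem_inter, SimpleGraph.mem_neighborFinset, memP, mem_singleton]
      constructor
      · rintro ⟨hadj, rfl | rfl⟩
        · exact absurd ((memNa v).2 hadj.symm) hv.2
        · rfl
      · rintro rfl; exact ⟨hvb.symm, Or.inr rfl⟩
    have h2 : G.neighborFinset v ∩ C = ∅ := by
      rw [Finset.eq_empty_iff_forall_notMem]
      intro x hx
      rw [mem_inter, SimpleGraph.mem_neighborFinset, memC, memNa, memNb] at hx
      exact notri hvb hx.2.2 hx.1
    have h3 : G.neighborFinset v ∩ B = ∅ := by
      rw [Finset.eq_empty_iff_forall_notMem]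
      intro x hx
      rw [mem_inter, SimpleGraph.mem_neighborFinset, memB, memNb] at hx
      exact notri hvb hx.2.1 hx.1
    rw [degnf, key (G.neighborFinset v), h1, h2, h3]
    simp
  have hdegC : ∀ v ∈ C, G.degree v = 2 + (G.neighborFinset v ∩ R).card := by
    intro v hv
    rw [memC] at hv
    have hva : G.Adj a v := (memNa v).1 hv.1
    have hvb : G.Adj b v := (memNb v).1 hv.2
    have h1 : G.neighborFinset v ∩ P = {a, b} := by
      ext x
      rw [mem_inter, SimpleGraph.mem_neighborFinset, memP]
      constructor
      · rintro ⟨_, h⟩; exact h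
      · rintro (rfl | rfl)
        · exact ⟨hva.symm, Or.inl rfl⟩
        · exact ⟨hvb.symm, Or.inr rfl⟩
    have h2 : G.neighborFinset v ∩ C = ∅ := by
      rw [Finset.eq_empty_iff_forall_notMem]
      intro x hx
      rw [mem_inter, SimpleGraph.mem_neighborFinset, memC, memNa, memNb] at hx
      exact notri hva hx.2.1 hx.1
    have h3 : G.neighborFinset v ∩ A = ∅ := by
      rw [Finset.eq_empty_iff_forall_notMem]
      intro x hx
      rw [mem_inter, SimpleGraph.mem_neighborFinset, memA, memNa] at hx
      exact notri hva hx.2.1 hx.1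
    have h4 : G.neighborFinset v ∩ B = ∅ := by
      rw [Finset.eq_empty_iff_forall_notMem]
      intro x hx
      rw [mem_inter, SimpleGraph.mem_neighborFinset, memB, memNb] at hx
      exact notri hvb hx.2.1 hx.1
    rw [degnf, key (G.neighborFinset v), h1, h2, h3, h4]
    have : ({a, b} : Finset V).card = 2 := by rw [Finset.card_pair hab]
    rw [this]
    simp
  have hdegR : ∀ v ∈ R, G.degree v = (G.neighborFinset v ∩ C).card +
      ((G.neighborFinset v ∩ A).card + ((G.neighborFinset v ∩ B).card +
        (G.neighborFinset v ∩ R).card)) := by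
    intro v hv
    rw [memR] at hv
    push_neg at hv
    have h1 : G.neighborFinset v ∩ P = ∅ := by
      rw [Finset.eq_empty_iff_forall_notMem]
      intro x hx
      rw [mem_inter, SimpleGraph.mem_neighborFinset, memP] at hx
      rcases hx with ⟨hadj, rfl | rfl⟩
      · exact hv.2.1 ((memNa v).2 hadj.symm)
      · exact hv.2.2 ((memNb v).2 hadj.symm)
    rw [degnf, key (G.neighborFinset v), h1]
    simp
  -- sums over the pieces
  have hSP : (∑ v ∈ P, G.degree v) = 10 := by
    rw [hPdef, Finset.sum_pair hab, hda, hdb]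
  have hSA : (∑ v ∈ A, G.degree v) = A.card +
      ((∑ v ∈ A, (G.neighborFinset v ∩ B).card) + ∑ v ∈ A, (G.neighborFinset v ∩ R).card) := by
    rw [Finset.sum_congr rfl hdegA]
    simp only [zero_add]
    rw [Finset.sum_add_distrib, Finset.sum_add_distrib, Finset.sum_const, smul_eq_mul, mul_one]
  have hSB : (∑ v ∈ B, G.degree v) = B.card +
      ((∑ v ∈ B, (G.neighborFinset v ∩ A).card) + ∑ v ∈ B, (G.neighborFinset v ∩ R).card) := by
    rw [Finset.sum_congr rfl hdegB]
    simp only [zero_add]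
    rw [Finset.sum_add_distrib, Finset.sum_add_distrib, Finset.sum_const, smul_eq_mul, mul_one]
  have hSC : (∑ v ∈ C, G.degree v) = 2 * C.card + ∑ v ∈ C, (G.neighborFinset v ∩ R).card := by
    rw [Finset.sum_congr rfl hdegC, Finset.sum_add_distrib, Finset.sum_const, smul_eq_mul,
      mul_comm]
  have hSR : (∑ v ∈ R, G.degree v) = (∑ v ∈ R, (G.neighborFinset v ∩ C).card) +
      ((∑ v ∈ R, (G.neighborFinset v ∩ A).card) + ((∑ v ∈ R, (G.neighborFinset v ∩ B).card) +
        ∑ v ∈ R, (G.neighborFinset v ∩ R).card)) := by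
    rw [Finset.sum_congr rfl hdegR, Finset.sum_add_distrib, Finset.sum_add_distrib,
      Finset.sum_add_distrib]
  -- degree sum over C via the filters
  have hCsum : (∑ v ∈ C, G.degree v) = 11 + 5 * (C.filter (fun v => G.degree v = 5)).card
      ∧ C.card = 3 + (C.filter (fun v => G.degree v = 5)).card := by
    have hvC : ∀ v ∈ C, G.degree v = 3 ∨ G.degree v = 4 ∨ G.degree v = 5 := by
      intro v _; have := hmin v; have := hmax v; omega
    have hCeq : C = C.filter (fun v => G.degree v = 3) ∪ (C.filter (fun v => G.degree v = 4)
        ∪ C.filter (fun v => G.degree v = 5)) := by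
      ext x
      simp only [mem_union, mem_filter]
      constructor
      · intro hxC
        rcases hvC x hxC with h | h | h
        exacts [Or.inl ⟨hxC, h⟩, Or.inr (Or.inl ⟨hxC, h⟩), Or.inr (Or.inr ⟨hxC, h⟩)]
      · rintro (⟨h, -⟩ | ⟨h, -⟩ | ⟨h, -⟩) <;> exact h
    have d1 : Disjoint (C.filter (fun v => G.degree v = 3))
        (C.filter (fun v => G.degree v = 4) ∪ C.filter (fun v => G.degree v = 5)) := by
      rw [Finset.disjoint_left]
      intro x h1 h2
      rw [mem_filter] at h1
      rw [mem_union, mem_filter, mem_filter] at h2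
      obtain ⟨-, h1⟩ := h1
      rcases h2 with ⟨-, h2⟩ | ⟨-, h2⟩ <;> omega
    have d2 : Disjoint (C.filter (fun v => G.degree v = 4))
        (C.filter (fun v => G.degree v = 5)) := by
      rw [Finset.disjoint_left]
      intro x h1 h2
      rw [mem_filter] at h1 h2
      obtain ⟨-, h1⟩ := h1
      obtain ⟨-, h2⟩ := h2
      omega
    have s3 : (∑ v ∈ C.filter (fun v => G.degree v = 3), G.degree v) = 3 := by
      rw [Finset.sum_congr rfl (fun v hv => (Finset.mem_filter.1 hv).2), Finset.sum_const, hx,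
        smul_eq_mul]
    have s4 : (∑ v ∈ C.filter (fun v => G.degree v = 4), G.degree v) = 8 := by
      rw [Finset.sum_congr rfl (fun v hv => (Finset.mem_filter.1 hv).2), Finset.sum_const, hy,
        smul_eq_mul]
    have s5 : (∑ v ∈ C.filter (fun v => G.degree v = 5), G.degree v)
        = 5 * (C.filter (fun v => G.degree v = 5)).card := by
      rw [Finset.sum_congr rfl (fun v hv => (Finset.mem_filter.1 hv).2), Finset.sum_const,
        smul_eq_mul, mul_comm]
    constructor
    · conv_lhs => rw [hCeq]
      rw [Finset.sum_union d1, Finset.sum_union d2, s3, s4, s5]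
      omega
    · conv_lhs => rw [hCeq]
      rw [Finset.card_union_of_disjoint d1, Finset.card_union_of_disjoint d2, hx, hy]
      omega
  obtain ⟨hSCval, hCcard⟩ := hCsum
  -- remaining numeric facts
  have h44 : (∑ v, G.degree v) = 44 := by
    rw [G.sum_degrees_eq_twice_card_edges, hcard]
  have hcA : C.card + A.card = 5 := by
    rw [hCdef, hAdef, Finset.card_inter_add_card_sdiff, hNa,
      SimpleGraph.card_neighborFinset_eq_degree, hda]
  have hcB : C.card + B.card = 5 := by
    rw [hCdef, hBdef, Finset.inter_comm, Finset.card_inter_add_card_sdiff, hNb,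
      SimpleGraph.card_neighborFinset_eq_degree, hdb]
  have hSAlb : 4 * A.card ≤ ∑ v ∈ A, G.degree v := by
    calc 4 * A.card = ∑ _v ∈ A, 4 := by rw [Finset.sum_const, smul_eq_mul, mul_comm]
    _ ≤ ∑ v ∈ A, G.degree v := Finset.sum_le_sum hua
  have hSBlb : 4 * B.card ≤ ∑ v ∈ B, G.degree v := by
    calc 4 * B.card = ∑ _v ∈ B, 4 := by rw [Finset.sum_const, smul_eq_mul, mul_comm]
    _ ≤ ∑ v ∈ B, G.degree v := Finset.sum_le_sum hub
  have hABb : (∑ v ∈ A, (G.neighborFinset v ∩ B).card) ≤ A.card * B.card := by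
    calc (∑ v ∈ A, (G.neighborFinset v ∩ B).card) ≤ ∑ _v ∈ A, B.card :=
      Finset.sum_le_sum fun v _ => Finset.card_le_card Finset.inter_subset_right
    _ = A.card * B.card := by rw [Finset.sum_const, smul_eq_mul]
  have dblAB := dbl A B
  have dblAR := dbl R A
  have dblBR := dbl R B
  have dblCR := dbl R C
  have hc34 : C.card = 3 ∨ C.card = 4 := by omega
  rcases hc34 with hc | hc
  · have hA2 : A.card = 2 := by omega
    have hB2 : B.card = 2 := by omega
    rw [hA2, hB2] at hABb
    omega
  · have hA1 : A.card = 1 := by omega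
    have hB1 : B.card = 1 := by omega
    rw [hA1, hB1] at hABb
    omega
end

section
/- There is no finite simple graph G satisfying all of the following: G is triangle-free; G has exactly 22 edges; every vertex of G has degree at least 3 and at most 5; G has two distinct nonadjacent vertices a and b with deg(a) = deg(b) = 5; a and b have exactly four common neighbors, of which exactly one has degree 3, exactly one has degree 4, and exactly two have degree 5; and every vertex adjacent to a but not to b has degree at least 4. -/
open Finset

private lemma double_count {V : Type*} [Fintype V] [DecidableEq V] (G : SimpleGraph V)
    [DecidableRel G.Adj] (S T : Finset V) :
    ∑ c ∈ S, (G.neighborFinset c ∩ T).card = ∑ t ∈ T, (G.neighborFinset t ∩ S).card := by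
  have h : ∀ (c : V) (T : Finset V), (G.neighborFinset c ∩ T).card
      = ∑ t ∈ T, if G.Adj c t then 1 else 0 := by
    intro c T
    rw [inter_comm, ← filter_mem_eq_inter, card_filter]
    simp [SimpleGraph.mem_neighborFinset]
  calc ∑ c ∈ S, (G.neighborFinset c ∩ T).card
      = ∑ c ∈ S, ∑ t ∈ T, if G.Adj c t then 1 else 0 := by simp only [h]
    _ = ∑ t ∈ T, ∑ c ∈ S, if G.Adj c t then 1 else 0 := Finset.sum_comm
    _ = ∑ t ∈ T, (G.neighborFinset t ∩ S).card := by
        refine sum_congr rfl fun t _ => ?_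
        rw [h]
        refine sum_congr rfl fun c _ => ?_
        by_cases hct : G.Adj c t
        · rw [if_pos hct, if_pos hct.symm]
        · rw [if_neg hct, if_neg fun h => hct h.symm]

theorem stmt_14 {V : Type*} [Fintype V] [DecidableEq V] (G : SimpleGraph V)
    [DecidableRel G.Adj]
    (htf : G.CliqueFree 3)
    (hcard : G.edgeFinset.card = 22)
    (hmin : ∀ v : V, 3 ≤ G.degree v)
    (hmax : ∀ v : V, G.degree v ≤ 5)
    (a b : V) (hab : a ≠ b) (hnadj : ¬ G.Adj a b)
    (hda : G.degree a = 5) (hdb : G.degree b = 5)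
    (hcn : (G.neighborFinset a ∩ G.neighborFinset b).card = 4)
    (hx : ((G.neighborFinset a ∩ G.neighborFinset b).filter (fun v => G.degree v = 3)).card = 1)
    (hy : ((G.neighborFinset a ∩ G.neighborFinset b).filter (fun v => G.degree v = 4)).card = 1)
    (hz : ((G.neighborFinset a ∩ G.neighborFinset b).filter (fun v => G.degree v = 5)).card = 2)
    (hua : ∀ v ∈ (G.neighborFinset a) \ (G.neighborFinset b), 4 ≤ G.degree v) :
    False := by
  classical
  set A := G.neighborFinset a with hA
  set B := G.neighborFinset b with hB
  set C := A ∩ B with hC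
  -- no triangles, pointwise
  have htri : ∀ x y z : V, G.Adj x y → G.Adj x z → G.Adj y z → False := by
    intro x y z h1 h2 h3
    exact htf {x, y, z} (SimpleGraph.is3Clique_triple_iff.mpr ⟨h1, h2, h3⟩)
  -- obtain u and w
  have hAcard : A.card = 5 := by rw [hA, SimpleGraph.card_neighborFinset_eq_degree]; exact hda
  have hBcard : B.card = 5 := by rw [hB, SimpleGraph.card_neighborFinset_eq_degree]; exact hdb
  have hUcard : (A \ B).card = 1 := by
    have h := Finset.card_sdiff_add_card_inter A B
    rw [← hC] at h
    omega
  have hWcard : (B \ A).card = 1 := by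
    have h := Finset.card_sdiff_add_card_inter B A
    rw [Finset.inter_comm, ← hC] at h
    omega
  obtain ⟨u, hu⟩ := Finset.card_eq_one.mp hUcard
  obtain ⟨w, hw⟩ := Finset.card_eq_one.mp hWcard
  have huA : u ∈ A := (Finset.mem_sdiff.mp (hu ▸ Finset.mem_singleton_self u)).1
  have huB : u ∉ B := (Finset.mem_sdiff.mp (hu ▸ Finset.mem_singleton_self u)).2
  have hwB : w ∈ B := (Finset.mem_sdiff.mp (hw ▸ Finset.mem_singleton_self w)).1
  have hwA : w ∉ A := (Finset.mem_sdiff.mp (hw ▸ Finset.mem_singleton_self w)).2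
  have hau : G.Adj a u := (SimpleGraph.mem_neighborFinset ..).mp huA
  have hbw : G.Adj b w := (SimpleGraph.mem_neighborFinset ..).mp hwB
  have haA : a ∉ A := by rw [hA, SimpleGraph.mem_neighborFinset]; exact G.irrefl
  have hbB : b ∉ B := by rw [hB, SimpleGraph.mem_neighborFinset]; exact G.irrefl
  have haB : a ∉ B := by
    rw [hB, SimpleGraph.mem_neighborFinset]; exact fun h => hnadj h.symm
  have hbA : b ∉ A := by rw [hA, SimpleGraph.mem_neighborFinset]; exact hnadj
  -- degree sum over C is 17
  have hmem345 : ∀ c ∈ C, G.degree c = 3 ∨ G.degree c = 4 ∨ G.degree c = 5 := by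
    intro c _
    have := hmin c; have := hmax c; omega
  have hsumC : ∑ c ∈ C, G.degree c = 17 := by
    have hd34 : Disjoint (C.filter (fun v => G.degree v = 3)) (C.filter (fun v => G.degree v = 4)) := by
      rw [Finset.disjoint_left]
      intro x h1 h2
      simp only [Finset.mem_filter] at h1 h2
      omega
    have hd35 : Disjoint (C.filter (fun v => G.degree v = 3)) (C.filter (fun v => G.degree v = 5)) := by
      rw [Finset.disjoint_left]
      intro x h1 h2
      simp only [Finset.mem_filter] at h1 h2
      omega
    have hd45 : Disjoint (C.filter (fun v => G.degree v = 4)) (C.filter (fun v => G.degree v = 5)) := by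
      rw [Finset.disjoint_left]
      intro x h1 h2
      simp only [Finset.mem_filter] at h1 h2
      omega
    have hunion : C = C.filter (fun v => G.degree v = 3) ∪ C.filter (fun v => G.degree v = 4)
        ∪ C.filter (fun v => G.degree v = 5) := by
      apply Finset.Subset.antisymm
      · intro c hc
        simp only [Finset.mem_union, Finset.mem_filter]
        rcases hmem345 c hc with h | h | h
        · exact Or.inl (Or.inl ⟨hc, h⟩)
        · exact Or.inl (Or.inr ⟨hc, h⟩)
        · exact Or.inr ⟨hc, h⟩
      · intro c hc
        simp only [Finset.mem_union, Finset.mem_filter] at hc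
        tauto
    conv_lhs => rw [hunion]
    rw [Finset.sum_union (by
      rw [Finset.disjoint_union_left]; exact ⟨hd35, hd45⟩),
      Finset.sum_union hd34]
    rw [Finset.sum_congr rfl (fun x hx => (Finset.mem_filter.mp hx).2),
        Finset.sum_congr rfl (fun x hx => (Finset.mem_filter.mp hx).2),
        Finset.sum_congr rfl (fun x hx => (Finset.mem_filter.mp hx).2)]
    simp only [Finset.sum_const, smul_eq_mul]
    rw [hx, hy, hz]
  -- distinctness
  have huw : u ≠ w := fun h => hwA (h ▸ huA)
  have hua' : a ≠ u := fun h => haA (h ▸ huA)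
  have hub : b ≠ u := fun h => hbA (h ▸ huA)
  have hwa : a ≠ w := fun h => haB (h ▸ hwB)
  have hwb : b ≠ w := fun h => hbB (h ▸ hwB)
  have haC : a ∉ C := fun h => haA (Finset.mem_inter.mp h).1
  have hbC : b ∉ C := fun h => hbA (Finset.mem_inter.mp h).1
  have huC : u ∉ C := fun h => huB (Finset.mem_inter.mp h).2
  have hwC : w ∉ C := fun h => hwA (Finset.mem_inter.mp h).1
  -- S = C ∪ {u, w}
  set S : Finset V := insert u (insert w C) with hS
  have haS : a ∉ S := by
    simp only [hS, Finset.mem_insert, not_or]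
    exact ⟨hua', hwa, haC⟩
  have hbS : b ∉ S := by
    simp only [hS, Finset.mem_insert, not_or]
    exact ⟨hub, hwb, hbC⟩
  have hScard : ∑ s ∈ S, G.degree s = 17 + G.degree u + G.degree w := by
    rw [hS, Finset.sum_insert (by simp [Finset.mem_insert, huw, huC]),
        Finset.sum_insert hwC, hsumC]
    ring
  have hScard3 : S.card = 6 := by
    rw [hS, Finset.card_insert_of_notMem (by simp [Finset.mem_insert, huw, huC]),
        Finset.card_insert_of_notMem hwC, hcn]
  -- T and R
  set T : Finset V := insert a (insert b S) with hT
  set R : Finset V := Finset.univ \ T with hR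
  -- sum of degrees over T
  have hsumT : ∑ v ∈ T, G.degree v = 27 + G.degree u + G.degree w := by
    rw [hT, Finset.sum_insert (by simp [Finset.mem_insert, hab, haS]),
        Finset.sum_insert hbS, hScard, hda, hdb]
    ring
  -- handshake
  have hhand : ∑ v ∈ T, G.degree v + ∑ v ∈ R, G.degree v = 44 := by
    have h1 : ∑ v ∈ R, G.degree v + ∑ v ∈ T, G.degree v = ∑ v : V, G.degree v :=
      Finset.sum_sdiff (Finset.subset_univ T)
    have h2 := G.sum_degrees_eq_twice_card_edges
    omega
  -- key: for each s ∈ S, degree s ≤ 2 + card (N(s) ∩ R)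
  have hkey : ∀ s ∈ S, G.degree s ≤ 2 + (G.neighborFinset s ∩ R).card := by
    intro s hs
    simp only [hS, Finset.mem_insert] at hs
    have hns : ∃ p q : V, G.neighborFinset s ⊆ insert p (insert q (G.neighborFinset s ∩ R)) := by
      rcases hs with rfl | rfl | hsC
      · -- s = u : neighbors in {a, w} ∪ R
        refine ⟨a, w, fun x hxn => ?_⟩
        have hadj : G.Adj s x := (SimpleGraph.mem_neighborFinset ..).mp hxn
        simp only [Finset.mem_insert]
        by_cases hxa : x = a
        · exact Or.inl hxa
        by_cases hxw : x = w
        · exact Or.inr (Or.inl hxw)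
        refine Or.inr (Or.inr (Finset.mem_inter.mpr ⟨hxn, Finset.mem_sdiff.mpr ⟨Finset.mem_univ x, ?_⟩⟩))
        simp only [hT, hS, Finset.mem_insert, not_or]
        refine ⟨hxa, ?_, ?_, hxw, ?_⟩
        · rintro rfl
          exact huB ((SimpleGraph.mem_neighborFinset ..).mpr hadj.symm)
        · rintro rfl; exact G.irrefl hadj
        · intro hxC
          have hxA : x ∈ A := (Finset.mem_inter.mp hxC).1
          exact htri a s x hau ((SimpleGraph.mem_neighborFinset ..).mp hxA) hadj
      · -- s = w : neighbors in {b, u} ∪ R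
        refine ⟨b, u, fun x hxn => ?_⟩
        have hadj : G.Adj s x := (SimpleGraph.mem_neighborFinset ..).mp hxn
        simp only [Finset.mem_insert]
        by_cases hxb : x = b
        · exact Or.inl hxb
        by_cases hxu : x = u
        · exact Or.inr (Or.inl hxu)
        refine Or.inr (Or.inr (Finset.mem_inter.mpr ⟨hxn, Finset.mem_sdiff.mpr ⟨Finset.mem_univ x, ?_⟩⟩))
        simp only [hT, hS, Finset.mem_insert, not_or]
        refine ⟨?_, hxb, hxu, ?_, ?_⟩
        · rintro rfl
          exact hwA ((SimpleGraph.mem_neighborFinset ..).mpr hadj.symm)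
        · rintro rfl; exact G.irrefl hadj
        · intro hxC
          have hxB : x ∈ B := (Finset.mem_inter.mp hxC).2
          exact htri b s x hbw ((SimpleGraph.mem_neighborFinset ..).mp hxB) hadj
      · -- s ∈ C : neighbors in {a, b} ∪ R
        have hsA : s ∈ A := (Finset.mem_inter.mp hsC).1
        have hsB : s ∈ B := (Finset.mem_inter.mp hsC).2
        have has : G.Adj a s := (SimpleGraph.mem_neighborFinset ..).mp hsA
        have hbs : G.Adj b s := (SimpleGraph.mem_neighborFinset ..).mp hsB
        refine ⟨a, b, fun x hxn => ?_⟩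
        have hadj : G.Adj s x := (SimpleGraph.mem_neighborFinset ..).mp hxn
        simp only [Finset.mem_insert]
        by_cases hxa : x = a
        · exact Or.inl hxa
        by_cases hxb : x = b
        · exact Or.inr (Or.inl hxb)
        refine Or.inr (Or.inr (Finset.mem_inter.mpr ⟨hxn, Finset.mem_sdiff.mpr ⟨Finset.mem_univ x, ?_⟩⟩))
        simp only [hT, hS, Finset.mem_insert, not_or]
        refine ⟨hxa, hxb, ?_, ?_, ?_⟩
        · intro hxu
          rw [hxu] at hadj
          exact htri a s u has hau hadj
        · intro hxw
          rw [hxw] at hadj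
          exact htri b s w hbs hbw hadj
        · intro hxC
          have hxA : x ∈ A := (Finset.mem_inter.mp hxC).1
          exact htri a s x has ((SimpleGraph.mem_neighborFinset ..).mp hxA) hadj
    obtain ⟨p, q, hsub⟩ := hns
    calc G.degree s = (G.neighborFinset s).card := (SimpleGraph.card_neighborFinset_eq_degree ..).symm
      _ ≤ (insert p (insert q (G.neighborFinset s ∩ R))).card := Finset.card_le_card hsub
      _ ≤ (insert q (G.neighborFinset s ∩ R)).card + 1 := Finset.card_insert_le ..
      _ ≤ ((G.neighborFinset s ∩ R).card + 1) + 1 :=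
          Nat.add_le_add_right (Finset.card_insert_le ..) 1
      _ = 2 + (G.neighborFinset s ∩ R).card := by ring
  have hSR2 : 17 + G.degree u + G.degree w ≤ 12 + ∑ s ∈ S, (G.neighborFinset s ∩ R).card := by
    calc 17 + G.degree u + G.degree w = ∑ s ∈ S, G.degree s := hScard.symm
      _ ≤ ∑ s ∈ S, (2 + (G.neighborFinset s ∩ R).card) := Finset.sum_le_sum hkey
      _ = 2 * S.card + ∑ s ∈ S, (G.neighborFinset s ∩ R).card := by
          rw [Finset.sum_add_distrib]; simp [mul_comm]
      _ = 12 + ∑ s ∈ S, (G.neighborFinset s ∩ R).card := by rw [hScard3]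
  -- double count and bound by degrees of R
  have hRS : ∑ s ∈ S, (G.neighborFinset s ∩ R).card ≤ ∑ r ∈ R, G.degree r := by
    rw [double_count]
    refine Finset.sum_le_sum fun r _ => ?_
    rw [← SimpleGraph.card_neighborFinset_eq_degree]
    exact Finset.card_le_card (Finset.inter_subset_left)
  -- degree bounds for u and w
  have hdu : 4 ≤ G.degree u := hua u (hu ▸ Finset.mem_singleton_self u)
  have hdw : 3 ≤ G.degree w := hmin w
  omega
end

section
/- There is no finite simple graph G satisfying all of the following: G is triangle-free; G has exactly 22 edges; every vertex of G has degree at least 3 and at most 5; G has two distinct nonadjacent vertices a and b with deg(a) = deg(b) = 5; a and b have exactly four common neighbors, of which exactly one has degree 3 and exactly three have degree 5; and the unique neighbor of a that is not adjacent to b has degree 3. -/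
set_option maxHeartbeats 1000000 in

theorem stmt_15 {V : Type*} [Fintype V] [DecidableEq V] (G : SimpleGraph V)
    [DecidableRel G.Adj]
    (htf : G.CliqueFree 3)
    (hcard : G.edgeFinset.card = 22)
    (hmin : ∀ v : V, 3 ≤ G.degree v)
    (hmax : ∀ v : V, G.degree v ≤ 5)
    (a b : V) (hab : a ≠ b) (hnadj : ¬ G.Adj a b)
    (hda : G.degree a = 5) (hdb : G.degree b = 5)
    (hcn : (G.neighborFinset a ∩ G.neighborFinset b).card = 4)
    (hx : ((G.neighborFinset a ∩ G.neighborFinset b).filter (fun v => G.degree v = 3)).card = 1)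
    (hz : ((G.neighborFinset a ∩ G.neighborFinset b).filter (fun v => G.degree v = 5)).card = 3)
    (hu : ∀ v ∈ (G.neighborFinset a) \ (G.neighborFinset b), G.degree v = 3) :
    False := by
  classical
  set A := G.neighborFinset a with hA
  set B := G.neighborFinset b with hB
  have tri : ∀ u v w : V, G.Adj u v → G.Adj u w → ¬ G.Adj v w := by
    intro u v w h1 h2 h3
    exact htf {u, v, w} (SimpleGraph.is3Clique_triple_iff.mpr ⟨h1, h2, h3⟩)
  have hcA : A.card = 5 := hda
  have hcB : B.card = 5 := hdb
  have hcAB : (A \ B).card = 1 := by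
    have := Finset.card_inter_add_card_sdiff A B; omega
  have hcBA : (B \ A).card = 1 := by
    have := Finset.card_inter_add_card_sdiff B A
    rw [Finset.inter_comm] at this; omega
  set S := insert a (insert b (A ∪ B)) with hS
  have memS : ∀ t, t ∈ S ↔ t = a ∨ t = b ∨ t ∈ A ∨ t ∈ B := by
    intro t
    simp [hS, Finset.mem_insert, Finset.mem_union, or_assoc]
  -- neighbors-inside-S bounds
  have boundAB : ∀ s ∈ A ∩ B, (G.neighborFinset s ∩ S).card ≤ 2 := by
    intro s hs
    rw [Finset.mem_inter] at hs
    have has : G.Adj a s := (SimpleGraph.mem_neighborFinset G a s).mp hs.1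
    have hbs : G.Adj b s := (SimpleGraph.mem_neighborFinset G b s).mp hs.2
    have hsub : G.neighborFinset s ∩ S ⊆ {a, b} := by
      intro t ht
      rw [Finset.mem_inter] at ht
      have hadj : G.Adj s t := (SimpleGraph.mem_neighborFinset G s t).mp ht.1
      rcases (memS t).mp ht.2 with h | h | h | h
      · simp [h]
      · simp [h]
      · exact absurd hadj (tri a s t has ((SimpleGraph.mem_neighborFinset G a t).mp h))
      · exact absurd hadj (tri b s t hbs ((SimpleGraph.mem_neighborFinset G b t).mp h))
    calc (G.neighborFinset s ∩ S).card ≤ ({a, b} : Finset V).card := Finset.card_le_card hsub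
      _ ≤ 2 := (Finset.card_insert_le _ _).trans (by simp)
  have boundA : ∀ s ∈ A \ B, (G.neighborFinset s ∩ S).card ≤ 2 := by
    intro s hs
    rw [Finset.mem_sdiff] at hs
    have has : G.Adj a s := (SimpleGraph.mem_neighborFinset G a s).mp hs.1
    have hsub : G.neighborFinset s ∩ S ⊆ insert a (B \ A) := by
      intro t ht
      rw [Finset.mem_inter] at ht
      have hadj : G.Adj s t := (SimpleGraph.mem_neighborFinset G s t).mp ht.1
      rcases (memS t).mp ht.2 with h | h | h | h
      · simp [h]
      · exfalso; apply hs.2; rw [hB, SimpleGraph.mem_neighborFinset]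
        subst h; exact hadj.symm
      · exact absurd hadj (tri a s t has ((SimpleGraph.mem_neighborFinset G a t).mp h))
      · by_cases h' : t ∈ A
        · exact absurd hadj (tri a s t has ((SimpleGraph.mem_neighborFinset G a t).mp h'))
        · exact Finset.mem_insert_of_mem (Finset.mem_sdiff.mpr ⟨h, h'⟩)
    calc (G.neighborFinset s ∩ S).card ≤ (insert a (B \ A)).card := Finset.card_le_card hsub
      _ ≤ (B \ A).card + 1 := Finset.card_insert_le _ _
      _ ≤ 2 := by omega
  have boundB : ∀ s ∈ B \ A, (G.neighborFinset s ∩ S).card ≤ 2 := by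
    intro s hs
    rw [Finset.mem_sdiff] at hs
    have hbs : G.Adj b s := (SimpleGraph.mem_neighborFinset G b s).mp hs.1
    have hsub : G.neighborFinset s ∩ S ⊆ insert b (A \ B) := by
      intro t ht
      rw [Finset.mem_inter] at ht
      have hadj : G.Adj s t := (SimpleGraph.mem_neighborFinset G s t).mp ht.1
      rcases (memS t).mp ht.2 with h | h | h | h
      · exfalso; apply hs.2; rw [hA, SimpleGraph.mem_neighborFinset]
        subst h; exact hadj.symm
      · simp [h]
      · by_cases h' : t ∈ B
        · exact absurd hadj (tri b s t hbs ((SimpleGraph.mem_neighborFinset G b t).mp h'))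
        · exact Finset.mem_insert_of_mem (Finset.mem_sdiff.mpr ⟨h, h'⟩)
      · exact absurd hadj (tri b s t hbs ((SimpleGraph.mem_neighborFinset G b t).mp h))
    calc (G.neighborFinset s ∩ S).card ≤ (insert b (A \ B)).card := Finset.card_le_card hsub
      _ ≤ (A \ B).card + 1 := Finset.card_insert_le _ _
      _ ≤ 2 := by omega
  -- non-memberships
  have haA : a ∉ A := by simp [hA]
  have haB : a ∉ B := by
    simp only [hB, SimpleGraph.mem_neighborFinset]
    intro h; exact hnadj h.symm
  have hbA : b ∉ A := by
    simp only [hA, SimpleGraph.mem_neighborFinset]; exact hnadj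
  have hbB : b ∉ B := by simp [hB]
  -- splitting sums over S
  have split : ∀ f : V → ℕ, ∑ s ∈ S, f s
      = f a + (f b + (∑ s ∈ A ∩ B, f s + (∑ s ∈ A \ B, f s + ∑ s ∈ B \ A, f s))) := by
    intro f
    have h1 : a ∉ insert b (A ∪ B) := by
      simp [Finset.mem_insert, Finset.mem_union, hab, haA, haB]
    have h2 : b ∉ A ∪ B := by simp [Finset.mem_union, hbA, hbB]
    rw [hS, Finset.sum_insert h1, Finset.sum_insert h2]
    have hunion : A ∪ B = (A ∩ B) ∪ ((A \ B) ∪ (B \ A)) := by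
      ext t; simp [Finset.mem_union, Finset.mem_inter, Finset.mem_sdiff]; tauto
    rw [hunion, Finset.sum_union, Finset.sum_union]
    · rw [Finset.disjoint_left]; intro t h1 h2
      rw [Finset.mem_sdiff] at h1 h2; exact h2.2 h1.1
    · rw [Finset.disjoint_left]; intro t h1 h2
      rw [Finset.mem_inter] at h1
      rw [Finset.mem_union, Finset.mem_sdiff, Finset.mem_sdiff] at h2
      tauto
  -- degree sum over A ∩ B equals 18
  have hdegAB : ∑ s ∈ A ∩ B, G.degree s = 18 := by
    set F3 := (A ∩ B).filter (fun v => G.degree v = 3) with hF3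
    set F5 := (A ∩ B).filter (fun v => G.degree v = 5) with hF5
    have hdisj : Disjoint F3 F5 := by
      rw [Finset.disjoint_left]; intro v h1 h2
      rw [hF3, Finset.mem_filter] at h1; rw [hF5, Finset.mem_filter] at h2
      omega
    have hsub : F3 ∪ F5 ⊆ A ∩ B := by
      apply Finset.union_subset <;> exact Finset.filter_subset _ _
    have hcardu : (F3 ∪ F5).card = 4 := by
      rw [Finset.card_union_of_disjoint hdisj, hx, hz]
    have hequ : F3 ∪ F5 = A ∩ B := Finset.eq_of_subset_of_card_le hsub (by omega)
    rw [← hequ, Finset.sum_union hdisj]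
    have e3 : ∑ s ∈ F3, G.degree s = 3 := by
      rw [Finset.sum_congr rfl (fun v hv => (Finset.mem_filter.mp hv).2),
        Finset.sum_const, hx]; rfl
    have e5 : ∑ s ∈ F5, G.degree s = 15 := by
      rw [Finset.sum_congr rfl (fun v hv => (Finset.mem_filter.mp hv).2),
        Finset.sum_const, hz]; rfl
    omega
  -- degree sum over S is at least 34
  have hdegS : 34 ≤ ∑ s ∈ S, G.degree s := by
    rw [split]
    have hA3 : ∑ s ∈ A \ B, G.degree s = 3 := by
      rw [Finset.sum_congr rfl (fun v hv => hu v hv), Finset.sum_const, hcAB]; rfl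
    have hB3 : 3 ≤ ∑ s ∈ B \ A, G.degree s := by
      obtain ⟨w, hw⟩ := Finset.card_eq_one.mp hcBA
      rw [hw, Finset.sum_singleton]; exact hmin w
    omega
  -- interior neighbor count sum over S is at most 22
  have hinS : ∑ s ∈ S, (G.neighborFinset s ∩ S).card ≤ 22 := by
    rw [split]
    have ha5 : (G.neighborFinset a ∩ S).card ≤ 5 := by
      calc (G.neighborFinset a ∩ S).card ≤ A.card :=
        Finset.card_le_card (Finset.inter_subset_left)
        _ = 5 := hcA
    have hb5 : (G.neighborFinset b ∩ S).card ≤ 5 := by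
      calc (G.neighborFinset b ∩ S).card ≤ B.card :=
        Finset.card_le_card (Finset.inter_subset_left)
        _ = 5 := hcB
    have sAB : ∑ s ∈ A ∩ B, (G.neighborFinset s ∩ S).card ≤ 8 := by
      calc ∑ s ∈ A ∩ B, (G.neighborFinset s ∩ S).card ≤ ∑ _s ∈ A ∩ B, 2 :=
        Finset.sum_le_sum boundAB
        _ = 8 := by rw [Finset.sum_const, hcn]; rfl
    have sA : ∑ s ∈ A \ B, (G.neighborFinset s ∩ S).card ≤ 2 := by
      calc ∑ s ∈ A \ B, (G.neighborFinset s ∩ S).card ≤ ∑ _s ∈ A \ B, 2 :=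
        Finset.sum_le_sum boundA
        _ = 2 := by rw [Finset.sum_const, hcAB]; rfl
    have sB : ∑ s ∈ B \ A, (G.neighborFinset s ∩ S).card ≤ 2 := by
      calc ∑ s ∈ B \ A, (G.neighborFinset s ∩ S).card ≤ ∑ _s ∈ B \ A, 2 :=
        Finset.sum_le_sum boundB
        _ = 2 := by rw [Finset.sum_const, hcBA]; rfl
    omega
  -- degree splits as inside + outside
  have hsplitdeg : ∀ s : V, G.degree s
      = (G.neighborFinset s ∩ S).card + (G.neighborFinset s ∩ Sᶜ).card := by
    intro s
    have h1 : G.neighborFinset s ∩ S = (G.neighborFinset s).filter (· ∈ S) := by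
      ext t; simp [Finset.mem_filter, Finset.mem_inter]
    have h2 : G.neighborFinset s ∩ Sᶜ = (G.neighborFinset s).filter (fun t => ¬ t ∈ S) := by
      ext t; simp [Finset.mem_filter, Finset.mem_inter, Finset.mem_compl]
    rw [h1, h2, Finset.card_filter_add_card_filter_not]
    rfl
  -- double counting: edges from S into complement
  have hdouble : ∑ s ∈ S, (G.neighborFinset s ∩ Sᶜ).card ≤ ∑ r ∈ Sᶜ, G.degree r := by
    have e1 : ∀ s : V, (G.neighborFinset s ∩ Sᶜ).card
        = ∑ r ∈ Sᶜ, if G.Adj s r then 1 else 0 := by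
      intro s
      have he : G.neighborFinset s ∩ Sᶜ = Sᶜ.filter (fun r => G.Adj s r) := by
        ext t; simp [Finset.mem_inter, Finset.mem_filter, Finset.mem_compl,
          SimpleGraph.mem_neighborFinset, and_comm]
      rw [he, Finset.card_filter]
    calc ∑ s ∈ S, (G.neighborFinset s ∩ Sᶜ).card
        = ∑ s ∈ S, ∑ r ∈ Sᶜ, if G.Adj s r then 1 else 0 := by
          exact Finset.sum_congr rfl (fun s _ => e1 s)
      _ = ∑ r ∈ Sᶜ, ∑ s ∈ S, if G.Adj s r then 1 else 0 := Finset.sum_comm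
      _ ≤ ∑ r ∈ Sᶜ, G.degree r := by
          apply Finset.sum_le_sum
          intro r _
          rw [← Finset.card_filter]
          calc (S.filter (fun s => G.Adj s r)).card ≤ (G.neighborFinset r).card := by
                apply Finset.card_le_card
                intro s hs
                rw [Finset.mem_filter] at hs
                rw [SimpleGraph.mem_neighborFinset]
                exact hs.2.symm
            _ = G.degree r := rfl
  -- final counting
  have htotal : ∑ v, G.degree v = 44 := by
    rw [G.sum_degrees_eq_twice_card_edges, hcard]
  have hcompl : ∑ s ∈ S, G.degree s + ∑ r ∈ Sᶜ, G.degree r = 44 := by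
    rw [Finset.sum_add_sum_compl, htotal]
  have hsum : ∑ s ∈ S, G.degree s
      = ∑ s ∈ S, (G.neighborFinset s ∩ S).card + ∑ s ∈ S, (G.neighborFinset s ∩ Sᶜ).card := by
    rw [← Finset.sum_add_distrib]
    exact Finset.sum_congr rfl (fun s _ => hsplitdeg s)
  omega
end
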